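/- arXiv:1612.05320 — 8 statements merged into one kernel-verified Lean document; each statement's English description precedes it below -/
import Mathlib

section
/- For every even integer ℓ ≥ 2, there exists a palindrome of length ℓ over the binary alphabet {0,1} whose critical exponent is exactly 2 (it contains a square but contains no factor of length p with period q satisfying p/q > 2). -/
/-- A word `x` has period `q` (with `1 ≤ q ≤ |x|`) if `x[i] = x[i+q]`
whenever both indices are in range. -/
def HasPeriod {A : Type*} (x : List A) (q : ℕ) : Prop :=
  1 ≤ q ∧ q ≤ x.length ∧ ∀ i : ℕ, i + q < x.length → x[i]? = x[i + q]?

/-- `w` contains an `e`-power: a nonempty factor of length `p` with period `q`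
and `p/q ≥ e`. -/
def ContainsPowGe {A : Type*} (w : List A) (e : ℚ) : Prop :=
  ∃ x : List A, ∃ q : ℕ, x ≠ [] ∧ x <:+: w ∧ HasPeriod x q ∧
    e ≤ (x.length : ℚ) / (q : ℚ)

/-- `w` contains an `e⁺`-power: a nonempty factor of length `p` with period `q`
and `p/q > e`. -/
def ContainsPowGt {A : Type*} (w : List A) (e : ℚ) : Prop :=
  ∃ x : List A, ∃ q : ℕ, x ≠ [] ∧ x <:+: w ∧ HasPeriod x q ∧
    e < (x.length : ℚ) / (q : ℚ)

/-- The critical exponent of `w` is exactly `e`: some nonempty factor has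
exponent at least `e`, and no nonempty factor has exponent exceeding `e`. -/
def CritExpIs {A : Type*} (w : List A) (e : ℚ) : Prop :=
  ContainsPowGe w e ∧ ¬ ContainsPowGt w e


/-!
The witness is the window of length `2m` of the Thue–Morse word `t` centred at `2^(2m+1)`.
For `k < 2^n` one has `t(2^n + k) = ¬t(k)` and `t(2^n - 1 - k) = t(k) xor (n odd)`, so around
`2^n` with `n` odd the word is a mirror image: the window is a palindrome whose two middle letters
form the square `aa`. Being a factor of the overlap-free Thue–Morse word, it has no factor of
exponent greater than `2`. Overlap-freeness is Thue's induction on the period `q`: an even period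
halves under `t(2n + b) = b xor t(n)`, and an odd one would shift the parity pattern of
`t(2n) ≠ t(2n + 1)` by an odd amount.
-/

def thueMorse : ℕ → Bool :=
  Nat.binaryRec false fun b _ t => b ^^ t

@[simp]
theorem thueMorse_bit (b : Bool) (n : ℕ) : thueMorse (Nat.bit b n) = (b ^^ thueMorse n) :=
  Nat.binaryRec_eq b n (.inl rfl)

@[simp]
theorem thueMorse_two_mul (n : ℕ) : thueMorse (2 * n) = thueMorse n := by
  simpa using thueMorse_bit false n

@[simp]
theorem thueMorse_two_mul_add_one (n : ℕ) : thueMorse (2 * n + 1) = !thueMorse n := by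
  simpa using thueMorse_bit true n

theorem thueMorse_two_pow_add {n k : ℕ} (hk : k < 2 ^ n) :
    thueMorse (2 ^ n + k) = !thueMorse k := by
  induction n generalizing k with
  | zero =>
    obtain rfl : k = 0 := by simpa using hk
    rfl
  | succ n ih =>
    cases k using Nat.bitCasesOn with
    | bit b a =>
      have ha : a < 2 ^ n := Nat.bit_lt_two_pow_succ_iff.mp hk
      have hbit : 2 ^ (n + 1) + Nat.bit b a = Nat.bit b (2 ^ n + a) := by
        simp only [Nat.bit_val]; ring
      rw [hbit, thueMorse_bit, thueMorse_bit, ih ha, Bool.xor_not]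

theorem thueMorse_two_pow_sub_one_sub {n k : ℕ} (hk : k < 2 ^ n) :
    thueMorse (2 ^ n - 1 - k) = (thueMorse k ^^ decide (Odd n)) := by
  induction n generalizing k with
  | zero =>
    obtain rfl : k = 0 := by simpa using hk
    rfl
  | succ n ih =>
    cases k using Nat.bitCasesOn with
    | bit b a =>
      have ha : a < 2 ^ n := Nat.bit_lt_two_pow_succ_iff.mp hk
      have hbit : 2 ^ (n + 1) - 1 - Nat.bit b a = Nat.bit (!b) (2 ^ n - 1 - a) := by
        cases b <;> simp only [Nat.bit_val, Bool.toNat] <;> simp <;> omega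
      rw [hbit, thueMorse_bit, thueMorse_bit, ih ha]
      cases b <;> by_cases hn : Odd n <;> simp [Nat.odd_add_one, hn]

theorem thueMorse_two_pow_sub_one_sub_eq_two_pow_add {n k : ℕ} (hn : Odd n) (hk : k < 2 ^ n) :
    thueMorse (2 ^ n - 1 - k) = thueMorse (2 ^ n + k) := by
  simp [thueMorse_two_pow_sub_one_sub hk, thueMorse_two_pow_add hk, hn]

theorem not_thueMorse_eq_and_eq (k : ℕ) :
    ¬ (thueMorse k = thueMorse (k + 1) ∧ thueMorse (k + 1) = thueMorse (k + 2)) := by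
  rintro ⟨h₁, h₂⟩
  rcases Nat.even_or_odd' k with ⟨a, rfl | rfl⟩
  · simp at h₁
  · rw [show 2 * a + 1 + 1 = 2 * (a + 1) by ring, show 2 * a + 1 + 2 = 2 * (a + 1) + 1 by ring]
      at h₂
    simp at h₂

theorem thueMorse_ne_succ_and_ne_succ_iff_even (n : ℕ) :
    (thueMorse n ≠ thueMorse (n + 1) ∧ thueMorse (n + 2) ≠ thueMorse (n + 3)) ↔ Even n := by
  rcases Nat.even_or_odd' n with ⟨a, rfl | rfl⟩
  · rw [show 2 * a + 2 = 2 * (a + 1) by ring, show 2 * a + 3 = 2 * (a + 1) + 1 by ring]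
    simp
  · rw [show 2 * a + 1 + 1 = 2 * (a + 1) by ring, show 2 * a + 1 + 2 = 2 * (a + 1) + 1 by ring,
      show 2 * a + 1 + 3 = 2 * (a + 2) by ring]
    simpa [Bool.not_eq_eq_eq_not] using not_thueMorse_eq_and_eq a

/-- The factor `t i, …, t (i + 2 * q)` has period `q`. -/
def HasOverlapAt {α : Type*} (t : ℕ → α) (i q : ℕ) : Prop :=
  ∀ j ≤ q, t (i + j) = t (i + j + q)

def OverlapFree {α : Type*} (t : ℕ → α) : Prop :=
  ∀ i q, 0 < q → ¬ HasOverlapAt t i q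

theorem OverlapFree.comp {α β : Type*} {t : ℕ → α} (ht : OverlapFree t) {g : α → β}
    (hg : Function.Injective g) : OverlapFree (g ∘ t) :=
  fun i q hq h => ht i q hq fun j hj => hg (h j hj)

theorem hasOverlapAt_thueMorse_of_bit {b : Bool} {a q : ℕ}
    (h : HasOverlapAt thueMorse (Nat.bit b a) (2 * q)) : HasOverlapAt thueMorse a q := by
  intro j hj
  have hj' := h (2 * j) (by omega)
  rwa [show Nat.bit b a + 2 * j = Nat.bit b (a + j) by simp only [Nat.bit_val]; ring,
    show Nat.bit b (a + j) + 2 * q = Nat.bit b (a + j + q) by simp only [Nat.bit_val]; ring,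
    thueMorse_bit, thueMorse_bit, Bool.xor_right_inj] at hj'

theorem thueMorse_overlapFree : OverlapFree thueMorse := by
  intro i q hq
  induction q using Nat.strong_induction_on generalizing i with
  | _ q ih =>
  intro h
  rcases Nat.even_or_odd' q with ⟨q, rfl | rfl⟩
  · cases i using Nat.bitCasesOn with
    | bit b a => exact ih q (by omega) a (by omega) (hasOverlapAt_thueMorse_of_bit h)
  · rcases Nat.eq_zero_or_pos q with rfl | hq1
    · exact not_thueMorse_eq_and_eq i ⟨h 0 (by omega), h 1 (by omega)⟩
    · have h₀ : thueMorse i = thueMorse (i + (2 * q + 1)) := h 0 (Nat.zero_le _)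
      have hparity : Even (i + (2 * q + 1)) ↔ Even i := by
        simp only [← thueMorse_ne_succ_and_ne_succ_iff_even, Nat.add_right_comm i (2 * q + 1)]
        rw [← h₀, ← h 1 (by omega), ← h 2 (by omega), ← h 3 (by omega)]
      simp only [Nat.even_add, Nat.not_even_bit1, iff_false] at hparity
      exact not_iff_self hparity

section Window

variable {α : Type*}

theorem getElem?_map_range_add (t : ℕ → α) {s n i : ℕ} (hi : i < n) :
    ((List.range n).map fun k => t (s + k))[i]? = some (t (s + i)) := by
  simp [hi]

theorem OverlapFree.not_containsPowGt_two {t : ℕ → α} (ht : OverlapFree t) (s n : ℕ) :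
    ¬ ContainsPowGt ((List.range n).map fun k => t (s + k)) 2 := by
  rintro ⟨x, q, -, hx, ⟨hq, -, hper⟩, hgt⟩
  obtain ⟨p, hpx, hxw⟩ := List.infix_iff_getElem?.mp hx
  simp only [List.length_map, List.length_range] at hpx
  have hq₀ : (0 : ℚ) < q := by exact_mod_cast hq
  have hlen : 2 * q < x.length := by exact_mod_cast (lt_div_iff₀ hq₀).mp hgt
  refine ht (s + p) q hq fun j hj => ?_
  have hjq : j + q < x.length := by omega
  have hxj := hper j hjq
  rw [List.getElem?_eq_getElem (by omega), List.getElem?_eq_getElem hjq, Option.some_inj] at hxj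
  have e₁ := hxw j (by omega)
  have e₂ := hxw (j + q) hjq
  rw [getElem?_map_range_add t (by omega), Option.some_inj] at e₁ e₂
  calc t (s + p + j) = x[j] := by rw [← e₁]; ring_nf
    _ = x[j + q] := hxj
    _ = t (s + p + j + q) := by rw [← e₂]; ring_nf

theorem reverse_map_range_add_eq (t : ℕ → α) {c m : ℕ} (hm : m ≤ c)
    (h : ∀ k < m, t (c - 1 - k) = t (c + k)) :
    ((List.range (2 * m)).map fun i => t (c - m + i)).reverse =
      (List.range (2 * m)).map fun i => t (c - m + i) := by
  refine List.ext_getElem (by simp) fun i _ hi => ?_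
  simp only [List.length_map, List.length_range] at hi
  simp only [List.getElem_reverse, List.getElem_map, List.getElem_range, List.length_map,
    List.length_range]
  rcases Nat.lt_or_ge i m with him | him
  · rw [show c - m + (2 * m - 1 - i) = c + (m - 1 - i) by omega, ← h (m - 1 - i) (by omega)]
    congr 1; omega
  · rw [show c - m + (2 * m - 1 - i) = c - 1 - (i - m) by omega, h (i - m) (by omega)]
    congr 1; omega

theorem pair_infix_map_range_add (t : ℕ → α) {s n i : ℕ} (hi : i + 1 < n) :
    [t (s + i), t (s + i + 1)] <:+: (List.range n).map fun k => t (s + k) := by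
  refine List.infix_iff_getElem?.mpr ⟨i, by simp; omega, fun j hj => ?_⟩
  simp only [List.length_cons, List.length_nil] at hj
  interval_cases j
  · rw [getElem?_map_range_add t (by omega)]; simp
  · rw [getElem?_map_range_add t (by omega)]; simp [Nat.add_comm 1 i, Nat.add_assoc]

end Window

theorem exists_even_binary_palindrome_critexp_two (ℓ : ℕ)
    (heven : Even ℓ) (hlen : 2 ≤ ℓ) :
    ∃ w : List (Fin 2), w.length = ℓ ∧ w.reverse = w ∧
      (∃ y : List (Fin 2), y ≠ [] ∧ y ++ y <:+: w) ∧
      ¬ ContainsPowGt w 2 := by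
  obtain ⟨m, rfl⟩ := heven
  set n := 2 * m + 1
  have hm : m < 2 ^ n :=
    Nat.lt_two_pow_self.trans_le (Nat.pow_le_pow_right two_pos (by omega))
  set t : ℕ → Fin 2 := finTwoEquiv.symm ∘ thueMorse
  have hmirror : ∀ k < m, t (2 ^ n - 1 - k) = t (2 ^ n + k) := fun k hk =>
    congrArg finTwoEquiv.symm <|
      thueMorse_two_pow_sub_one_sub_eq_two_pow_add (odd_two_mul_add_one m) (by omega)
  refine ⟨(List.range (2 * m)).map fun i => t (2 ^ n - m + i), by simp; omega,
    reverse_map_range_add_eq t hm.le hmirror, ⟨[t (2 ^ n - 1)], by simp, ?_⟩,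
    (thueMorse_overlapFree.comp finTwoEquiv.symm.injective).not_containsPowGt_two _ _⟩
  have hsquare := pair_infix_map_range_add t (s := 2 ^ n - m) (i := m - 1) (n := 2 * m) (by omega)
  rwa [show 2 ^ n - m + (m - 1) = 2 ^ n - 1 - 0 by omega,
    show 2 ^ n - 1 - 0 + 1 = 2 ^ n + 0 by omega, ← hmirror 0 (by omega)] at hsquare
end

section
/- Every palindrome of odd length at least 7 over the binary alphabet {0,1} contains a (7/3)-power, i.e., contains a nonempty factor of length p having period q with p/q ≥ 7/3. -/
lemma cube_power {A : Type*} (a : A) (w : List A) (h : [a,a,a] <:+: w) :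
    ContainsPowGe w (7/3) := by
  refine ⟨[a,a,a], 1, by simp, h, ⟨le_refl 1, by simp, ?_⟩, by norm_num⟩
  intro i hi
  simp only [List.length_cons, List.length_nil] at hi
  have : i < 2 := by omega
  interval_cases i <;> rfl

lemma ab_power {A : Type*} (a b : A) (w : List A) (h : [a,b,a,b,a] <:+: w) :
    ContainsPowGe w (7/3) := by
  refine ⟨[a,b,a,b,a], 2, by simp, h, ⟨by norm_num, by simp, ?_⟩, by norm_num⟩
  intro i hi
  simp only [List.length_cons, List.length_nil] at hi
  have : i < 3 := by omega
  interval_cases i <;> rfl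

lemma abb_power {A : Type*} (a b : A) (w : List A) (h : [a,b,b,a,b,b,a] <:+: w) :
    ContainsPowGe w (7/3) := by
  refine ⟨[a,b,b,a,b,b,a], 3, by simp, h, ⟨by norm_num, by simp, ?_⟩, by norm_num⟩
  intro i hi
  simp only [List.length_cons, List.length_nil] at hi
  have : i < 4 := by omega
  interval_cases i <;> rfl

lemma len7 {A : Type*} (m : List A) (h : m.length = 7) :
    ∃ a b c d e f g, m = [a,b,c,d,e,f,g] := by
  match m with
  | [a,b,c,d,e,f,g] => exact ⟨a,b,c,d,e,f,g, rfl⟩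
  | [] | [_] | [_,_] | [_,_,_] | [_,_,_,_] | [_,_,_,_,_] | [_,_,_,_,_,_] => simp at h
  | _::_::_::_::_::_::_::_::_ => simp at h

theorem odd_binary_palindrome_contains_73_power (w : List (Fin 2))
    (hpal : w.reverse = w) (hodd : Odd w.length) (hlen : 7 ≤ w.length) :
    ContainsPowGe w (7 / 3) := by
  obtain ⟨t, ht⟩ := hodd
  set k : ℕ := t - 3 with hk
  have hn : w.length = 2 * k + 7 := by omega
  set m : List (Fin 2) := (w.drop k).take 7 with hm
  have hminf : m <:+: w :=
    (List.take_prefix _ _).isInfix.trans (List.drop_suffix _ _).isInfix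
  have hmlen : m.length = 7 := by
    rw [hm, List.length_take, List.length_drop, hn]; omega
  have hmpal : m.reverse = m := by
    rw [hm, List.reverse_take, List.reverse_drop, hpal, List.length_drop, hn,
      show 2*k+7 - k = k+7 from by omega, show k+7-7 = k from by omega,
      List.drop_take, show k+7-k = 7 from by omega]
  obtain ⟨a, b, c, d, e, f, g, hm7⟩ := len7 m hmlen
  rw [hm7] at hmpal hminf
  simp only [List.reverse_cons, List.reverse_nil, List.nil_append, List.cons_append,
    List.cons.injEq, and_true] at hmpal
  obtain ⟨rfl, rfl, rfl, -⟩ := hmpal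
  fin_cases g <;> fin_cases f <;> fin_cases e <;> fin_cases d
  · exact cube_power 0 w (List.IsInfix.trans ⟨[], [0, 0, 0, 0], rfl⟩ hminf)
  · exact cube_power 0 w (List.IsInfix.trans ⟨[], [1, 0, 0, 0], rfl⟩ hminf)
  · exact ab_power 0 1 w (List.IsInfix.trans ⟨[0], [0], rfl⟩ hminf)
  · exact cube_power 1 w (List.IsInfix.trans ⟨[0, 0], [0, 0], rfl⟩ hminf)
  · exact cube_power 0 w (List.IsInfix.trans ⟨[0, 1], [1, 0], rfl⟩ hminf)
  · exact ab_power 0 1 w (List.IsInfix.trans ⟨[], [1, 0], rfl⟩ hminf)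
  · exact abb_power 0 1 w (List.IsInfix.trans ⟨[], [], rfl⟩ hminf)
  · exact cube_power 1 w (List.IsInfix.trans ⟨[0], [1, 1, 0], rfl⟩ hminf)
  · exact cube_power 0 w (List.IsInfix.trans ⟨[1], [0, 0, 1], rfl⟩ hminf)
  · exact abb_power 1 0 w (List.IsInfix.trans ⟨[], [], rfl⟩ hminf)
  · exact ab_power 0 1 w (List.IsInfix.trans ⟨[1], [1], rfl⟩ hminf)
  · exact cube_power 1 w (List.IsInfix.trans ⟨[1, 0], [0, 1], rfl⟩ hminf)
  · exact cube_power 0 w (List.IsInfix.trans ⟨[1, 1], [1, 1], rfl⟩ hminf)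
  · exact ab_power 1 0 w (List.IsInfix.trans ⟨[1], [1], rfl⟩ hminf)
  · exact cube_power 1 w (List.IsInfix.trans ⟨[], [0, 1, 1, 1], rfl⟩ hminf)
  · exact cube_power 1 w (List.IsInfix.trans ⟨[], [1, 1, 1, 1], rfl⟩ hminf)
end

section
/- Let f be the 19-uniform morphism on {0,1} defined by f(0) = 0110100110110010110 and f(1) = 1001011001001101001 (Rampersad's morphism). For every n ≥ 1, the word f^n(0) is a palindrome of odd length 19^n that contains no factor of length p with period q satisfying p/q > 7/3. -/
/-- Rampersad's 19-uniform morphism on {0,1}. -/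
def rampersad : List (Fin 2) → List (Fin 2) :=
  fun w => w.flatMap (fun a =>
    if a = 0 then [0, 1, 1, 0, 1, 0, 0, 1, 1, 0, 1, 1, 0, 0, 1, 0, 1, 1, 0]
    else [1, 0, 0, 1, 0, 1, 1, 0, 0, 1, 0, 0, 1, 1, 0, 1, 0, 0, 1])

/-!
Both images of Rampersad's morphism `f` are palindromes, so `f` commutes with reversal, and `f`
is 19-uniform, so `|f^n(0)| = 19^n`.

For the exponent bound, `f` maps words avoiding `(7/3)⁺`-powers to such words. The images of `0`
and `1` differ in every position, and neither occurs inside the image of a two-letter word at an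
offset that is not a multiple of 19. Hence a periodic factor of `f(w)` of length at least 65 has a
period `19 q`, and it comes from a factor of `w` with period `q` whose exponent is still greater
than 7/3. A shorter factor lies in the image of a factor of `w` of length at most 5, and these
finitely many cases are checked by computation.
-/

section Periodicity

variable {α : Type*}

def PeriodicOn (w : List α) (i L q : ℕ) : Prop :=
  ∀ p, i ≤ p → p + q < i + L → w[p]? = w[p + q]?

theorem PeriodicOn.mono {w : List α} {i L L' q : ℕ} (h : PeriodicOn w i L q) (hL : L' ≤ L) :
    PeriodicOn w i L' q :=
  fun p hip hpq => h p hip (by omega)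

theorem exists_periodicOn_of_infix {x w : List α} {q : ℕ} (hxw : x <:+: w)
    (hx : HasPeriod x q) : ∃ i, i + x.length ≤ w.length ∧ PeriodicOn w i x.length q := by
  obtain ⟨i, hi, hxi⟩ := List.infix_iff_getElem?.1 hxw
  refine ⟨i, by omega, fun p hip hpq => ?_⟩
  have hpos : ∀ m (hm : m < x.length), w[i + m]? = x[m]? := fun m hm => by
    rw [List.getElem?_eq_getElem hm, ← hxi m hm, Nat.add_comm]
  obtain ⟨m, rfl⟩ := Nat.exists_eq_add_of_le hip
  rw [hpos m (by omega), Nat.add_assoc, hpos (m + q) (by omega)]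
  exact hx.2.2 m (by omega)

theorem containsPowGt_of_periodicOn {w : List α} {i L q : ℕ} {e : ℚ} (hq : 0 < q)
    (hqL : q ≤ L) (hL : i + L ≤ w.length) (hP : PeriodicOn w i L q) (he : e < (L : ℚ) / q) :
    ContainsPowGt w e := by
  have hlen : ((w.drop i).take L).length = L := by
    simp only [List.length_take, List.length_drop]; omega
  have hget : ∀ m < L, ((w.drop i).take L)[m]? = w[i + m]? := fun m hm => by
    rw [List.getElem?_take, if_pos hm, List.getElem?_drop]
  refine ⟨(w.drop i).take L, q, ?_, (List.take_prefix _ _).isInfix.trans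
    (List.drop_suffix _ _).isInfix, ⟨hq, by omega, fun m hm => ?_⟩, by rwa [hlen]⟩
  · rw [← List.length_pos_iff, hlen]; omega
  · rw [hlen] at hm
    rw [hget m (by omega), hget (m + q) hm, ← Nat.add_assoc]
    exact hP (i + m) (by omega) (by omega)

theorem ContainsPowGt.mono {y w : List α} {e : ℚ} (h : ContainsPowGt y e) (hyw : y <:+: w) :
    ContainsPowGt w e :=
  let ⟨x, q, hx, hxy, hper, he⟩ := h
  ⟨x, q, hx, hxy.trans hyw, hper, he⟩

theorem seven_thirds_lt_div_iff {L q : ℕ} (hq : 0 < q) :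
    (7 / 3 : ℚ) < L / q ↔ 7 * q < 3 * L := by
  rw [div_lt_div_iff₀ (by norm_num) (by exact_mod_cast hq)]
  norm_cast
  omega

theorem containsPowGt_seven_thirds_iff {w : List α} :
    ContainsPowGt w (7 / 3) ↔
      ∃ i q, 0 < q ∧ i + (7 * q / 3 + 1) ≤ w.length ∧ PeriodicOn w i (7 * q / 3 + 1) q := by
  constructor
  · rintro ⟨x, q, -, hxw, hx, he⟩
    obtain ⟨i, hi, hP⟩ := exists_periodicOn_of_infix hxw hx
    have hq : 0 < q := hx.1
    have h73 := (seven_thirds_lt_div_iff hq).1 he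
    exact ⟨i, q, hq, by omega, hP.mono (by omega)⟩
  · rintro ⟨i, q, hq, hi, hP⟩
    exact containsPowGt_of_periodicOn hq (by omega) hi hP
      ((seven_thirds_lt_div_iff hq).2 (by omega))

end Periodicity

section UniformMorphism

variable {α : Type*} {g : α → List α} {k : ℕ}

theorem length_flatMap_of_uniform (hg : ∀ a, (g a).length = k) (w : List α) :
    (w.flatMap g).length = k * w.length := by
  simp [List.length_flatMap, hg, Nat.mul_comm]

theorem drop_flatMap_of_uniform (hg : ∀ a, (g a).length = k) (w : List α) (j : ℕ) :
    (w.flatMap g).drop (k * j) = (w.drop j).flatMap g := by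
  rcases le_total j w.length with hj | hj
  · conv_lhs => rw [← List.take_append_drop j w, List.flatMap_append]
    exact List.drop_left' (by rw [length_flatMap_of_uniform hg, List.length_take_of_le hj])
  · have hlen : (w.flatMap g).length ≤ k * j := by
      rw [length_flatMap_of_uniform hg]
      exact Nat.mul_le_mul_left k hj
    rw [List.drop_of_length_le hlen, List.drop_of_length_le hj, List.flatMap_nil]

theorem getElem?_flatMap_of_uniform (hg : ∀ a, (g a).length = k) (w : List α) (j r : ℕ) :
    (w.flatMap g)[k * j + r]? = ((w.drop j).flatMap g)[r]? := by
  rw [← drop_flatMap_of_uniform hg, List.getElem?_drop]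

theorem getElem?_flatMap_of_lt (hg : ∀ a, (g a).length = k) {w : List α} {j r : ℕ}
    (hj : j < w.length) (hr : r < k) : (w.flatMap g)[k * j + r]? = (g w[j])[r]? := by
  rw [getElem?_flatMap_of_uniform hg, List.drop_eq_getElem_cons hj, List.flatMap_cons,
    List.getElem?_append_left (by rwa [hg])]

theorem exists_infix_flatMap_of_infix (hg : ∀ a, (g a).length = k) (hk : 0 < k) {x w : List α}
    (hxw : x <:+: w.flatMap g) :
    ∃ y, y <:+: w ∧ k * y.length < x.length + 2 * k ∧ x <:+: y.flatMap g := by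
  obtain ⟨s, hs, hxs⟩ := List.infix_iff_getElem?.1 hxw
  rw [length_flatMap_of_uniform hg] at hs
  have hs_eq : k * (s / k) + s % k = s := Nat.div_add_mod s k
  have hsk : s % k < k := Nat.mod_lt s hk
  have ht_ge : s % k + x.length ≤ k * ((s % k + x.length + k - 1) / k) := by
    have := Nat.lt_mul_div_succ (s % k + x.length + k - 1) hk
    rw [Nat.mul_add_one] at this
    omega
  have ht_le := Nat.mul_div_le (s % k + x.length + k - 1) k
  -- `x` starts at offset `s % k` inside block `j` and meets the `t` blocks `j, …, j + t - 1`
  generalize s / k = j at hs_eq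
  generalize (s % k + x.length + k - 1) / k = t at ht_ge ht_le
  have hjt : j + t < w.length + 1 := by
    refine Nat.lt_of_mul_lt_mul_left (a := k) ?_
    rw [Nat.mul_add, Nat.mul_add]
    omega
  have hy : ((w.drop j).take t).length = t := by
    simp only [List.length_take, List.length_drop]; omega
  refine ⟨(w.drop j).take t, (List.take_prefix _ _).isInfix.trans (List.drop_suffix _ _).isInfix,
    by rw [hy]; omega, List.infix_iff_getElem?.2 ⟨s % k, ?_, fun m hm => ?_⟩⟩
  · rw [length_flatMap_of_uniform hg, hy]; omega
  · have hsplit := congrArg (List.flatMap g) (List.take_append_drop t (w.drop j))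
    rw [List.flatMap_append] at hsplit
    rw [← List.getElem?_append_left (l₂ := ((w.drop j).drop t).flatMap g)
      (by rw [length_flatMap_of_uniform hg, hy]; omega), hsplit,
      ← getElem?_flatMap_of_uniform hg, ← hxs m hm]
    congr 1
    omega

theorem dvd_of_periodicOn_flatMap (hg : ∀ a, (g a).length = k) (hk : 0 < k)
    (hsync : ∀ a b c, ∀ s < k, 0 < s → ∃ r < k, (g a)[r]? ≠ (g b ++ g c)[s + r]?)
    {w : List α} {i L q : ℕ} (hP : PeriodicOn (w.flatMap g) i L q)
    (hL : i + L ≤ k * w.length) (hlong : q + 2 * k ≤ L + 1) : k ∣ q := by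
  rw [Nat.dvd_iff_mod_eq_zero]
  by_contra hs
  have hsk : q % k < k := Nat.mod_lt q hk
  have hq_eq : k * (q / k) + q % k = q := Nat.div_add_mod q k
  have hj_ge : i ≤ k * ((i + k - 1) / k) := by
    have := Nat.lt_mul_div_succ (i + k - 1) hk
    rw [Nat.mul_add_one] at this
    omega
  have hj_le := Nat.mul_div_le (i + k - 1) k
  -- block `j` is the first block of `w.flatMap g` that starts at or after position `i`
  generalize (i + k - 1) / k = j at hj_ge hj_le
  generalize q / k = Q at hq_eq
  have hjQ : j + Q + 1 < w.length := by
    refine Nat.lt_of_mul_lt_mul_left (a := k) ?_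
    rw [Nat.mul_add, Nat.mul_add, Nat.mul_one]
    omega
  have hj : j < w.length := by omega
  obtain ⟨r, hr, hne⟩ := hsync w[j] w[j + Q] w[j + Q + 1] (q % k) hsk (by omega)
  apply hne
  have hdrop : w.drop (j + Q) = w[j + Q] :: w[j + Q + 1] :: w.drop (j + Q + 2) := by
    rw [List.drop_eq_getElem_cons (by omega), List.drop_eq_getElem_cons (by omega)]
  calc (g w[j])[r]? = (w.flatMap g)[k * j + r]? := (getElem?_flatMap_of_lt hg (by omega) hr).symm
    _ = (w.flatMap g)[k * j + r + q]? := hP _ (by omega) (by omega)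
    _ = ((w.drop (j + Q)).flatMap g)[q % k + r]? := by
      rw [← getElem?_flatMap_of_uniform hg, Nat.mul_add]
      congr 1
      omega
    _ = (g w[j + Q] ++ g w[j + Q + 1])[q % k + r]? := by
      rw [hdrop, List.flatMap_cons, List.flatMap_cons, ← List.append_assoc,
        List.getElem?_append_left (by simp only [List.length_append, hg]; omega)]

theorem exists_periodicOn_of_periodicOn_flatMap (hg : ∀ a, (g a).length = k) (hk : 0 < k)
    (hinj : ∀ a b r, r < k → (g a)[r]? = (g b)[r]? → a = b)
    {w : List α} {i L q : ℕ} (hP : PeriodicOn (w.flatMap g) i L (k * q))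
    (hL : i + L ≤ k * w.length) (hqL : k * q < L) :
    ∃ j t, L ≤ k * (t + q) ∧ j + (t + q) ≤ w.length ∧ PeriodicOn w j (t + q) q := by
  have hj_le := Nat.mul_div_le i k
  have hj_gt := Nat.lt_mul_div_succ i hk
  have hj'_le := Nat.mul_div_le (i + L - k * q - 1) k
  have hj'_gt := Nat.lt_mul_div_succ (i + L - k * q - 1) hk
  have hjj' : i / k ≤ (i + L - k * q - 1) / k := Nat.div_le_div_right (by omega)
  -- the blocks `j, …, j'` are those meeting the window `[i, i + L - k * q)`
  generalize i / k = j at hj_le hj_gt hjj'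
  generalize (i + L - k * q - 1) / k = j' at hj'_le hj'_gt hjj'
  rw [Nat.mul_add_one] at hj_gt hj'_gt
  have hj'q : j' + q < w.length := by
    refine Nat.lt_of_mul_lt_mul_left (a := k) ?_
    rw [Nat.mul_add]
    omega
  refine ⟨j, j' + 1 - j, ?_, by omega, fun p hjp hpj' => ?_⟩
  · have hkt : k * (j' + 1 - j + q) + k * j = k * j' + k + k * q := by
      rw [← Nat.mul_add, ← Nat.mul_add_one, ← Nat.mul_add]
      congr 1
      omega
    omega
  · have hkp := Nat.mul_le_mul_left k hjp
    have hkp' := Nat.mul_le_mul_left k (show p ≤ j' by omega)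
    -- position `k * p + (i - k * p) = max i (k * p)` lies both in block `p` and in the window
    have hr : i - k * p < k := by omega
    have hper := hP (k * p + (i - k * p)) (by omega) (by omega)
    rw [getElem?_flatMap_of_lt hg (by omega) hr, show k * p + (i - k * p) + k * q =
      k * (p + q) + (i - k * p) by rw [Nat.mul_add]; omega,
      getElem?_flatMap_of_lt hg (by omega) hr] at hper
    rw [List.getElem?_eq_getElem (by omega), List.getElem?_eq_getElem (by omega),
      hinj _ _ _ hr hper]

end UniformMorphism

def rampersadImg (a : Fin 2) : List (Fin 2) :=
  if a = 0 then [0, 1, 1, 0, 1, 0, 0, 1, 1, 0, 1, 1, 0, 0, 1, 0, 1, 1, 0]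
  else [1, 0, 0, 1, 0, 1, 1, 0, 0, 1, 0, 0, 1, 1, 0, 1, 0, 0, 1]

theorem rampersad_eq_flatMap (w : List (Fin 2)) : rampersad w = w.flatMap rampersadImg := rfl

theorem length_rampersadImg (a : Fin 2) : (rampersadImg a).length = 19 := by
  fin_cases a <;> rfl

theorem reverse_rampersadImg (a : Fin 2) : (rampersadImg a).reverse = rampersadImg a := by
  fin_cases a <;> rfl

theorem rampersadImg_injective_at :
    ∀ a b : Fin 2, ∀ r < 19, (rampersadImg a)[r]? = (rampersadImg b)[r]? → a = b := by
  decide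

theorem rampersadImg_synchronizing : ∀ a b c : Fin 2, ∀ s < 19, 0 < s →
    ∃ r < 19, (rampersadImg a)[r]? ≠ (rampersadImg b ++ rampersadImg c)[s + r]? := by
  decide

theorem length_rampersad (w : List (Fin 2)) : (rampersad w).length = 19 * w.length :=
  length_flatMap_of_uniform length_rampersadImg w

theorem reverse_rampersad (w : List (Fin 2)) : (rampersad w).reverse = rampersad w.reverse := by
  rw [rampersad_eq_flatMap, List.reverse_flatMap]
  exact congrArg (List.flatMap · _) (funext reverse_rampersadImg)

-- Windows are compared through this binary encoding so that the exhaustive check below stays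
-- within reach of the kernel.
def binaryValue : List (Fin 2) → ℕ
  | [] => 0
  | a :: w => a + 2 * binaryValue w

theorem testBit_binaryValue (w : List (Fin 2)) (m : ℕ) :
    (binaryValue w).testBit m = decide (w[m]? = some 1) := by
  induction w generalizing m with
  | nil => simp [binaryValue]
  | cons a w ih =>
    cases m with
    | zero => fin_cases a <;> simp [binaryValue]
    | succ m =>
      rw [Nat.testBit_add_one, binaryValue, List.getElem?_cons_succ, ← ih]
      congr 1
      omega

theorem periodicOn_iff_binaryValue {w : List (Fin 2)} {i q d : ℕ} (h : i + q + d ≤ w.length) :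
    PeriodicOn w i (q + d) q ↔
      binaryValue w >>> i % 2 ^ d = binaryValue w >>> (i + q) % 2 ^ d := by
  have hbit : ∀ m < d, (binaryValue w).testBit (i + m) = (binaryValue w).testBit (i + q + m) ↔
      w[i + m]? = w[i + m + q]? := fun m hm => by
    rw [testBit_binaryValue, testBit_binaryValue, List.getElem?_eq_getElem (by omega),
      show i + q + m = i + m + q by omega, List.getElem?_eq_getElem (by omega)]
    generalize w[i + m] = a
    generalize w[i + m + q] = b
    fin_cases a <;> fin_cases b <;> simp
  constructor
  · intro hP
    refine Nat.eq_of_testBit_eq fun m => ?_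
    rw [Nat.testBit_mod_two_pow, Nat.testBit_mod_two_pow, Nat.testBit_shiftRight,
      Nat.testBit_shiftRight]
    by_cases hm : m < d
    · rw [(hbit m hm).2 (hP _ (by omega) (by omega))]
    · simp [hm]
  · intro hbin p hip hpq
    obtain ⟨m, rfl⟩ := Nat.exists_eq_add_of_le hip
    refine (hbit m (by omega)).1 ?_
    have := congrArg (Nat.testBit · m) hbin
    simpa [Nat.testBit_mod_two_pow, Nat.testBit_shiftRight, show m < d by omega] using this

def avoidsSevenThirdsPlus (w : List (Fin 2)) : Bool :=
  (List.range w.length).all fun i => (List.range' 1 w.length).all fun q =>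
    w.length < i + (7 * q / 3 + 1) ||
      binaryValue w >>> i % 2 ^ (7 * q / 3 + 1 - q) !=
        binaryValue w >>> (i + q) % 2 ^ (7 * q / 3 + 1 - q)

theorem avoidsSevenThirdsPlus_iff (w : List (Fin 2)) :
    avoidsSevenThirdsPlus w = true ↔ ¬ ContainsPowGt w (7 / 3) := by
  rw [containsPowGt_seven_thirds_iff]
  simp only [avoidsSevenThirdsPlus, List.all_eq_true, List.mem_range, List.mem_range'_1,
    Bool.or_eq_true, decide_eq_true_eq, bne_iff_ne, ne_eq, not_exists, not_and]
  have hwin : ∀ i q, 0 < q → i + (7 * q / 3 + 1) ≤ w.length →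
      (PeriodicOn w i (7 * q / 3 + 1) q ↔ binaryValue w >>> i % 2 ^ (7 * q / 3 + 1 - q) =
        binaryValue w >>> (i + q) % 2 ^ (7 * q / 3 + 1 - q)) := fun i q hq hi => by
    rw [← periodicOn_iff_binaryValue (by omega), Nat.add_sub_cancel' (by omega)]
  constructor
  · intro h i q hq hi hP
    rcases h i (by omega) q (by omega) with hshort | hne
    · omega
    · exact hne ((hwin i q hq hi).1 hP)
  · intro h i hi q hq
    by_cases hshort : w.length < i + (7 * q / 3 + 1)
    · exact Or.inl hshort
    · exact Or.inr fun heq => h i q (by omega) (by omega) ((hwin i q (by omega) (by omega)).2 heq)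

def wordsUpTo : ℕ → List (List (Fin 2))
  | 0 => [[]]
  | n + 1 => [] :: (wordsUpTo n).flatMap fun w => [0 :: w, 1 :: w]

theorem mem_wordsUpTo {n : ℕ} {w : List (Fin 2)} (h : w.length ≤ n) : w ∈ wordsUpTo n := by
  induction n generalizing w with
  | zero => simp_all [wordsUpTo]
  | succ n ih =>
    rcases w with _ | ⟨a, w⟩
    · exact List.mem_cons_self
    · refine List.mem_cons_of_mem _ (List.mem_flatMap.2 ⟨w, ih (by simpa using h), ?_⟩)
      fin_cases a <;> simp

theorem not_containsPowGt_rampersad_of_length_le_five {y : List (Fin 2)} (hy : y.length ≤ 5)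
    (h : ¬ ContainsPowGt y (7 / 3)) : ¬ ContainsPowGt (rampersad y) (7 / 3) := by
  have hcheck : ∀ y ∈ wordsUpTo 5,
      avoidsSevenThirdsPlus y = true → avoidsSevenThirdsPlus (rampersad y) = true := by
    decide +kernel
  rw [← avoidsSevenThirdsPlus_iff] at h ⊢
  exact hcheck y (mem_wordsUpTo hy) h

theorem containsPowGt_of_periodicOn_rampersad {w : List (Fin 2)} {i L q : ℕ}
    (hP : PeriodicOn (rampersad w) i L q) (hL : i + L ≤ (rampersad w).length) (hq : 0 < q)
    (hlong : 65 ≤ L) (hexp : 7 * q < 3 * L) : ContainsPowGt w (7 / 3) := by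
  rw [length_rampersad] at hL
  rw [rampersad_eq_flatMap] at hP
  obtain ⟨q, rfl⟩ := dvd_of_periodicOn_flatMap length_rampersadImg (by norm_num)
    rampersadImg_synchronizing hP hL (by omega)
  obtain ⟨j, t, hLt, hjt, hP'⟩ := exists_periodicOn_of_periodicOn_flatMap length_rampersadImg
    (by norm_num) rampersadImg_injective_at hP hL (by omega)
  exact containsPowGt_of_periodicOn (by omega) (by omega) hjt hP'
    ((seven_thirds_lt_div_iff (by omega)).2 (by omega))

theorem not_containsPowGt_rampersad {w : List (Fin 2)} (hw : ¬ ContainsPowGt w (7 / 3)) :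
    ¬ ContainsPowGt (rampersad w) (7 / 3) := by
  rintro ⟨x, q, hx, hxw, hper, hexp⟩
  have hq : 0 < q := hper.1
  by_cases hlong : 65 ≤ x.length
  · obtain ⟨i, hi, hP⟩ := exists_periodicOn_of_infix hxw hper
    exact hw (containsPowGt_of_periodicOn_rampersad hP hi hq hlong
      ((seven_thirds_lt_div_iff hq).1 hexp))
  · obtain ⟨y, hyw, hy, hxy⟩ :=
      exists_infix_flatMap_of_infix length_rampersadImg (by norm_num) hxw
    exact not_containsPowGt_rampersad_of_length_le_five (by omega) (fun h => hw (h.mono hyw))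
      ⟨x, q, hx, hxy, hper, hexp⟩

theorem reverse_rampersad_iterate (n : ℕ) (w : List (Fin 2)) :
    (rampersad^[n] w).reverse = rampersad^[n] w.reverse := by
  induction n generalizing w with
  | zero => rfl
  | succ n ih =>
    rw [Function.iterate_succ_apply, Function.iterate_succ_apply, ih, reverse_rampersad]

theorem length_rampersad_iterate (n : ℕ) (w : List (Fin 2)) :
    (rampersad^[n] w).length = 19 ^ n * w.length := by
  induction n with
  | zero => simp
  | succ n ih => rw [Function.iterate_succ_apply', length_rampersad, ih, pow_succ']; ring

theorem not_containsPowGt_rampersad_iterate (n : ℕ) {w : List (Fin 2)}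
    (hw : ¬ ContainsPowGt w (7 / 3)) : ¬ ContainsPowGt (rampersad^[n] w) (7 / 3) := by
  induction n with
  | zero => exact hw
  | succ n ih => rw [Function.iterate_succ_apply']; exact not_containsPowGt_rampersad ih

theorem rampersad_iterate_palindrome_avoids_general (n : ℕ) :
    ((rampersad^[n]) [0]).reverse = (rampersad^[n]) [0] ∧
    ((rampersad^[n]) [0]).length = 19 ^ n ∧
    Odd ((rampersad^[n]) [0]).length ∧
    ¬ ContainsPowGt ((rampersad^[n]) [0]) (7 / 3) := by
  have hlen : ((rampersad^[n]) [0]).length = 19 ^ n := by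
    rw [length_rampersad_iterate, List.length_singleton, Nat.mul_one]
  refine ⟨reverse_rampersad_iterate n [0], hlen, hlen ▸ Odd.pow (by decide), ?_⟩
  exact not_containsPowGt_rampersad_iterate n ((avoidsSevenThirdsPlus_iff [0]).1 (by decide))

theorem rampersad_iterate_palindrome_avoids (n : ℕ) (hn : 1 ≤ n) :
    ((rampersad^[n]) [0]).reverse = (rampersad^[n]) [0] ∧
    ((rampersad^[n]) [0]).length = 19 ^ n ∧
    Odd ((rampersad^[n]) [0]).length ∧
    ¬ ContainsPowGt ((rampersad^[n]) [0]) (7 / 3) :=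
  rampersad_iterate_palindrome_avoids_general n
end

section
/- Every palindrome of odd length at least 17 over the ternary alphabet {0,1,2} contains a (7/4)-power, i.e., contains a nonempty factor of length p having period q with p/q ≥ 7/4. -/
/-! ### Auxiliary machinery -/

/-- letter `k` of the length-17 palindrome whose half is encoded in base 3 by `n`. -/
def letterN (n k : ℕ) : ℕ := n / 3^(min k (16-k)) % 3

/-- checks that the length-17 palindrome encoded by `n` contains a 7/4-power. -/
def checkN (n : ℕ) : Bool :=
  (List.range 9).any fun q' =>
    (List.range (18 - (7*(q'+1)+3)/4)).any fun i =>
      (List.range ((7*(q'+1)+3)/4 - (q'+1))).all fun j =>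
        letterN n (i+j) == letterN n (i+j+(q'+1))

set_option maxRecDepth 100000 in
set_option maxHeartbeats 4000000 in
theorem chunkN0 : (List.range 2187).all (fun m => checkN (0 + 9*m)) = true := by decide
set_option maxRecDepth 100000 in
set_option maxHeartbeats 4000000 in
theorem chunkN1 : (List.range 2187).all (fun m => checkN (1 + 9*m)) = true := by decide
set_option maxRecDepth 100000 in
set_option maxHeartbeats 4000000 in
theorem chunkN2 : (List.range 2187).all (fun m => checkN (2 + 9*m)) = true := by decide
set_option maxRecDepth 100000 in
set_option maxHeartbeats 4000000 in
theorem chunkN3 : (List.range 2187).all (fun m => checkN (3 + 9*m)) = true := by decide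
set_option maxRecDepth 100000 in
set_option maxHeartbeats 4000000 in
theorem chunkN4 : (List.range 2187).all (fun m => checkN (4 + 9*m)) = true := by decide
set_option maxRecDepth 100000 in
set_option maxHeartbeats 4000000 in
theorem chunkN5 : (List.range 2187).all (fun m => checkN (5 + 9*m)) = true := by decide
set_option maxRecDepth 100000 in
set_option maxHeartbeats 4000000 in
theorem chunkN6 : (List.range 2187).all (fun m => checkN (6 + 9*m)) = true := by decide
set_option maxRecDepth 100000 in
set_option maxHeartbeats 4000000 in
theorem chunkN7 : (List.range 2187).all (fun m => checkN (7 + 9*m)) = true := by decide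
set_option maxRecDepth 100000 in
set_option maxHeartbeats 4000000 in
theorem chunkN8 : (List.range 2187).all (fun m => checkN (8 + 9*m)) = true := by decide

theorem checkN_all (n : ℕ) (hn : n < 19683) : checkN n = true := by
  have key : ∀ r < 9, ∀ m < 2187, checkN (r + 9*m) = true := by
    intro r hr m hm
    have hm' : m ∈ List.range 2187 := List.mem_range.2 hm
    interval_cases r
    · exact (List.all_eq_true.1 chunkN0) m hm'
    · exact (List.all_eq_true.1 chunkN1) m hm'
    · exact (List.all_eq_true.1 chunkN2) m hm'
    · exact (List.all_eq_true.1 chunkN3) m hm'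
    · exact (List.all_eq_true.1 chunkN4) m hm'
    · exact (List.all_eq_true.1 chunkN5) m hm'
    · exact (List.all_eq_true.1 chunkN6) m hm'
    · exact (List.all_eq_true.1 chunkN7) m hm'
    · exact (List.all_eq_true.1 chunkN8) m hm'
  have h1 : n = n % 9 + 9 * (n / 9) := by omega
  rw [h1]
  exact key _ (by omega) _ (by omega)

/-- base-3 encoding of a list of digits. -/
def enc : List ℕ → ℕ
  | [] => 0
  | c :: u => c + 3 * enc u

theorem enc_lt (u : List ℕ) (hu : ∀ c ∈ u, c < 3) : enc u < 3 ^ u.length := by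
  induction u with
  | nil => simp [enc]
  | cons c u ih =>
    have hc : c < 3 := hu c (by simp)
    have h := ih (fun d hd => hu d (by simp [hd]))
    simp only [enc, List.length_cons, pow_succ]
    omega

theorem enc_digit (u : List ℕ) (hu : ∀ c ∈ u, c < 3) :
    ∀ k, k < u.length → some (enc u / 3^k % 3) = u[k]? := by
  induction u with
  | nil => intro k hk; simp at hk
  | cons c u ih =>
    intro k hk
    have hc : c < 3 := hu c (by simp)
    cases k with
    | zero => simp [enc]; omega
    | succ k =>
      have hk' : k < u.length := by simpa using hk
      have : (c + 3 * enc u) / 3 ^ (k+1) = enc u / 3 ^ k := by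
        rw [pow_succ, mul_comm (3^k) 3, ← Nat.div_div_eq_div_mul]
        congr 1
        omega
      simpa [enc, this] using ih (fun d hd => hu d (by simp [hd])) k hk'

set_option maxHeartbeats 2000000 in
/-- Key finite fact: every length-17 palindrome over `Fin 3` contains a 7/4-power. -/
theorem key17 (v : List (Fin 3)) (hlen : v.length = 17)
    (hsym : ∀ k, k < 17 → v[k]? = v[16-k]?) : ContainsPowGe v (7/4) := by
  classical
  set u : List ℕ := (v.take 9).map Fin.val with hu_def
  have hu_len : u.length = 9 := by simp [hu_def, hlen]
  have hu3 : ∀ c ∈ u, c < 3 := by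
    intro c hc
    simp only [hu_def, List.mem_map] at hc
    obtain ⟨a, _, rfl⟩ := hc
    exact a.isLt
  set n := enc u with hn_def
  -- letters of the encoded palindrome agree with `v`
  have hletter : ∀ k, (hk : k < 17) → letterN n k = (v[k]'(by omega)).val := by
    intro k hk
    have hmin : min k (16-k) < 9 := by omega
    have h1 : some (letterN n k) = u[min k (16-k)]? :=
      enc_digit u hu3 _ (by omega)
    have h2 : u[min k (16-k)]? = Option.map Fin.val v[min k (16-k)]? := by
      simp [hu_def, List.getElem?_map, List.getElem?_take, hmin]
    have h3 : v[min k (16-k)]? = v[k]? := by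
      rcases le_or_gt k 8 with h | h
      · have : min k (16-k) = k := by omega
        rw [this]
      · have : min k (16-k) = 16 - k := by omega
        rw [this, ← hsym k hk]
    rw [h2, h3, List.getElem?_eq_getElem (by omega)] at h1
    simpa using h1
  -- run the finite check
  have hlt : n < 19683 := by
    have := enc_lt u hu3
    rwa [hu_len] at this
  have hc := checkN_all n hlt
  unfold checkN at hc
  simp only [List.any_eq_true, List.all_eq_true, List.mem_range, beq_iff_eq] at hc
  obtain ⟨q', hq', i, hi, hper⟩ := hc
  set q := q' + 1 with hq_def
  set p := (7*q+3)/4 with hp_def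
  have hq1 : 1 ≤ q := Nat.le_add_left 1 q'
  have hqp : q ≤ p := by omega
  have hq9 : q ≤ 9 := by omega
  have hp17 : i + p ≤ 17 := by omega
  have hp2 : 2 ≤ p := by omega
  refine ⟨(v.drop i).take p, q, ?_, ?_, ⟨hq1, ?_, ?_⟩, ?_⟩
  · -- nonempty
    have : ((v.drop i).take p).length = p := by
      simp [List.length_take, hlen]; omega
    intro h
    rw [h] at this
    simp at this
    omega
  · -- infix
    exact ((List.take_prefix p (v.drop i)).isInfix).trans
      ((List.drop_suffix i v).isInfix)
  · -- q ≤ length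
    have : ((v.drop i).take p).length = p := by
      simp [List.length_take, hlen]; omega
    omega
  · -- period
    intro k hk
    have hxlen : ((v.drop i).take p).length = p := by
      simp [List.length_take, hlen]; omega
    rw [hxlen] at hk
    have hk1 : k < p := by omega
    have hk2 : k + q < p := hk
    have e1 : ((v.drop i).take p)[k]? = v[i+k]? := by
      rw [List.getElem?_take, if_pos hk1, List.getElem?_drop]
    have e2 : ((v.drop i).take p)[k+q]? = v[i+(k+q)]? := by
      rw [List.getElem?_take, if_pos hk2, List.getElem?_drop]
    rw [e1, e2]
    have hj := hper k (by omega)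
    have hik : i + k < 17 := by omega
    have hikq : i + k + q < 17 := by omega
    have hv1 := hletter (i+k) hik
    have hv2 := hletter (i+k+(q'+1)) (by omega)
    rw [hv1, hv2] at hj
    have : v[i+k]'(by omega) = v[i+k+(q'+1)]'(by omega) := Fin.val_injective hj
    have hidx : i+(k+q) = i+k+(q'+1) := by omega
    rw [hidx, List.getElem?_eq_getElem (by omega), List.getElem?_eq_getElem (by omega), this]
  · -- exponent
    have hxlen : ((v.drop i).take p).length = p := by
      simp [List.length_take, hlen]; omega
    rw [hxlen]
    have hq0 : (0:ℚ) < (q:ℚ) := by exact_mod_cast hq1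
    rw [div_le_div_iff₀ (by norm_num) hq0]
    exact_mod_cast (show 7*q ≤ p*4 by omega)

theorem odd_ternary_palindrome_contains_74_power (w : List (Fin 3))
    (hpal : w.reverse = w) (hodd : Odd w.length) (hlen : 17 ≤ w.length) :
    ContainsPowGe w (7 / 4) := by
  obtain ⟨m, hm⟩ := hodd
  have hm8 : 8 ≤ m := by omega
  set v : List (Fin 3) := (w.drop (m-8)).take 17 with hv_def
  have hvlen : v.length = 17 := by
    simp [hv_def, List.length_take, List.length_drop]; omega
  have hw_sym : ∀ j, j < w.length → w[j]? = w[w.length - 1 - j]? := by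
    intro j hj
    conv_lhs => rw [← hpal]
    exact List.getElem?_reverse hj
  have hsym : ∀ k, k < 17 → v[k]? = v[16-k]? := by
    intro k hk
    have e1 : v[k]? = w[m-8+k]? := by
      rw [hv_def, List.getElem?_take, if_pos hk, List.getElem?_drop]
    have e2 : v[16-k]? = w[m-8+(16-k)]? := by
      rw [hv_def, List.getElem?_take, if_pos (by omega), List.getElem?_drop]
    rw [e1, e2]
    have := hw_sym (m-8+k) (by omega)
    rw [this]
    congr 1
    omega
  have hvinf : v <:+: w :=
    ((List.take_prefix 17 (w.drop (m-8))).isInfix).trans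
      ((List.drop_suffix (m-8) w).isInfix)
  obtain ⟨x, q, hx, hxinf, hP, hE⟩ := key17 v hvlen hsym
  exact ⟨x, q, hx, hxinf.trans hvinf, hP, hE⟩
end

section
/- For every odd integer ℓ ≥ 17, there exists a palindrome of length ℓ over the ternary alphabet {0,1,2} whose critical exponent is exactly 7/4: it contains a factor of length p with period q satisfying p/q ≥ 7/4, but contains no factor of length p with period q satisfying p/q > 7/4. -/
/-!
The witness is the central factor of length `ℓ` of `φ^ℓ(0)`, where `φ` is Dejean's 19-uniform
morphism `a ↦ a + 0120212012102120210` over `ℤ/3`. The block and its shifts are palindromes, so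
`φ` commutes with reversal and every iterate is a palindrome of odd length `19^k`. The central
block of `φ^ℓ(0)` has the 17-letter core `12021201210212021`, which contains the
7/4-power `1202120` of period 4, and which the central factor of length `ℓ ≥ 17` contains.

Freeness of 7/4⁺-powers is preserved by `φ`. A shortest repetition of exponent `> 7/4` and period
`q` in `φ(w)` either has `q < 23`, and then lies in the image of a factor of length at most 3 of
`w`, which is checked exhaustively; or `q` is a multiple of 19, and it pulls back to `w`; or it is
misaligned, which is impossible because the 7-letter windows starting in the first 13 positions
of the block are pairwise distinct even after shifting letters.
-/

section Words

variable {A : Type*}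

theorem List.take_drop_infix (l : List A) (i k : ℕ) : (l.drop i).take k <:+: l :=
  (List.take_prefix _ _).isInfix.trans (List.drop_suffix _ _).isInfix

theorem HasPeriod.map {B : Type*} {x : List A} {q : ℕ} (f : A → B) (h : HasPeriod x q) :
    HasPeriod (x.map f) q := by
  obtain ⟨hq, hqx, hx⟩ := h
  refine ⟨hq, by simpa using hqx, fun i hi => ?_⟩
  simp only [List.getElem?_map, hx i (by simpa using hi)]

/-- Exactly central only when `w.length - ℓ` is even. -/
def centralFactor (w : List A) (ℓ : ℕ) : List A :=
  (w.drop ((w.length - ℓ) / 2)).take ℓ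

theorem length_centralFactor {w : List A} {ℓ : ℕ} (h : ℓ ≤ w.length) :
    (centralFactor w ℓ).length = ℓ := by
  simp only [centralFactor, List.length_take, List.length_drop]
  omega

theorem centralFactor_infix (w : List A) (ℓ : ℕ) : centralFactor w ℓ <:+: w :=
  w.take_drop_infix _ _

theorem reverse_centralFactor {w : List A} {ℓ : ℕ} (hw : w.reverse = w) (hℓ : ℓ ≤ w.length)
    (heven : Even (w.length - ℓ)) : (centralFactor w ℓ).reverse = centralFactor w ℓ := by
  obtain ⟨m, hm⟩ := heven
  rw [centralFactor, List.reverse_take, List.reverse_drop, hw, List.length_drop, List.drop_take,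
    show w.length - (w.length - ℓ) / 2 - (w.length - (w.length - ℓ) / 2 - ℓ) = ℓ by omega,
    show w.length - (w.length - ℓ) / 2 - ℓ = (w.length - ℓ) / 2 by omega]

theorem infix_centralFactor {w a x b : List A} {ℓ : ℕ} (hw : w = a ++ x ++ b)
    (hab : a.length = b.length) (hx : x.length ≤ ℓ) (hℓ : ℓ ≤ w.length)
    (heven : Even (w.length - ℓ)) : x <:+: centralFactor w ℓ := by
  obtain ⟨r, hr⟩ := heven
  have hlen : w.length = a.length + x.length + b.length := by simp [hw, Nat.add_assoc]
  rw [List.infix_iff_getElem?]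
  refine ⟨a.length - r, by rw [length_centralFactor hℓ]; omega, fun i hi => ?_⟩
  rw [centralFactor, List.getElem?_take_of_lt (by omega), List.getElem?_drop,
    show (w.length - ℓ) / 2 + (i + (a.length - r)) = a.length + i by omega, hw,
    List.append_assoc, List.getElem?_append_right (by omega), List.getElem?_append_left (by omega)]
  simp

theorem List.exists_eq_append_cons_of_odd_length {l : List A} (h : Odd l.length) :
    ∃ x c y, l = x ++ c :: y ∧ x.length = y.length := by
  obtain ⟨r, hr⟩ := h
  refine ⟨l.take r, l[r], l.drop (r + 1), ?_, by simp; omega⟩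
  rw [← List.drop_eq_getElem_cons, List.take_append_drop]

end Words

section Repetitions

variable {A : Type*}

/-- `RepeatsAt w i q n`: the factor `w[i, i + q + n)` has period `q`. -/
def RepeatsAt (w : List A) (i q n : ℕ) : Prop := ∀ t < n, w[i + t]? = w[i + t + q]?

/-- Index form of a factor of period `q` and exponent `(q + n) / q > 7/4`. -/
def HasPowGt74 (w : List A) : Prop :=
  ∃ i q n, 1 ≤ q ∧ i + q + n ≤ w.length ∧ 3 * q < 4 * n ∧ RepeatsAt w i q n

instance [DecidableEq A] (w : List A) (i q n : ℕ) : Decidable (RepeatsAt w i q n) :=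
  inferInstanceAs (Decidable (∀ t < n, _))

namespace RepeatsAt

variable {w : List A} {i q n : ℕ}

theorem mono {m : ℕ} (h : RepeatsAt w i q n) (hm : m ≤ n) : RepeatsAt w i q m :=
  fun t ht => h t (by omega)

theorem of_map {B : Type*} {f : A → B} (hf : Function.Injective f)
    (h : RepeatsAt (w.map f) i q n) : RepeatsAt w i q n := fun t ht => by
  simpa only [List.getElem?_map, Option.map_injective hf |>.eq_iff] using h t ht

theorem drop {d : ℕ} (h : RepeatsAt w (d + i) q n) : RepeatsAt (w.drop d) i q n := fun t ht => by
  simpa only [List.getElem?_drop, Nat.add_assoc] using h t ht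

theorem take {k : ℕ} (h : RepeatsAt w i q n) (hk : i + q + n ≤ k) :
    RepeatsAt (w.take k) i q n := fun t ht => by
  rw [List.getElem?_take_of_lt (by omega), List.getElem?_take_of_lt (by omega)]
  exact h t ht

end RepeatsAt

theorem HasPowGt74.of_infix {x w : List A} (hx : HasPowGt74 x) (h : x <:+: w) :
    HasPowGt74 w := by
  obtain ⟨i, q, n, hq, hlen, hqn, hrep⟩ := hx
  obtain ⟨k, hk, hget⟩ := List.infix_iff_getElem?.mp h
  refine ⟨i + k, q, n, hq, by omega, hqn, fun t ht => ?_⟩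
  rw [show i + k + t = (i + t) + k by omega, show i + t + k + q = (i + t + q) + k by omega,
    hget _ (by omega), hget _ (by omega), ← List.getElem?_eq_getElem, ← List.getElem?_eq_getElem]
  exact hrep t ht

theorem hasPowGt74_of_containsPowGt {w : List A} (h : ContainsPowGt w (7 / 4)) :
    HasPowGt74 w := by
  obtain ⟨x, q, -, hinf, ⟨hq, hqx, hper⟩, hlt⟩ := h
  rw [div_lt_div_iff₀ (by norm_num) (by exact_mod_cast hq)] at hlt
  have hqn : 7 * q < x.length * 4 := by exact_mod_cast hlt
  exact HasPowGt74.of_infix ⟨0, q, x.length - q, hq, by omega, by omega,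
    fun t ht => by simpa using hper t (by omega)⟩ hinf

theorem hasPowGt74_of_getElem?_eq {w : List A} {j : ℕ} (hj : j + 2 ≤ w.length)
    (h : w[j]? = w[j + 1]?) : HasPowGt74 w :=
  ⟨j, 1, 1, le_rfl, by omega, by omega, fun t ht => by simpa [show t = 0 by omega] using h⟩

end Repetitions

namespace Dejean

def block : List (Fin 3) := [0, 1, 2, 0, 2, 1, 2, 0, 1, 2, 1, 0, 2, 1, 2, 0, 2, 1, 0]

/-- Dejean's morphism. -/
def morph (w : List (Fin 3)) : List (Fin 3) := w.flatMap fun a => block.map (a + ·)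

theorem morph_cons (a : Fin 3) (w : List (Fin 3)) :
    morph (a :: w) = block.map (a + ·) ++ morph w := rfl

theorem morph_append (u v : List (Fin 3)) : morph (u ++ v) = morph u ++ morph v := by
  simp [morph]

theorem length_morph (w : List (Fin 3)) : (morph w).length = 19 * w.length := by
  induction w with
  | nil => rfl
  | cons a w ih =>
    rw [morph_cons, List.length_append, List.length_map, ih, List.length_cons, Nat.mul_succ,
      Nat.add_comm]
    rfl

theorem morph_map_add (c : Fin 3) (w : List (Fin 3)) :
    morph (w.map (c + ·)) = (morph w).map (c + ·) := by
  simp [morph, List.flatMap_map, List.map_flatMap, add_assoc]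

theorem reverse_morph (w : List (Fin 3)) : (morph w).reverse = morph w.reverse := by
  have hblock : ∀ a : Fin 3, (block.map (a + ·)).reverse = block.map (a + ·) := by decide
  induction w with
  | nil => rfl
  | cons a w ih =>
    rw [morph_cons, List.reverse_append, ih, hblock, List.reverse_cons, morph_append]
    simp [morph]

theorem drop_morph (w : List (Fin 3)) (k : ℕ) : (morph w).drop (19 * k) = morph (w.drop k) := by
  induction w generalizing k with
  | nil => simp [morph]
  | cons a w ih =>
    cases k with
    | zero => simp
    | succ k =>
      rw [morph_cons, Nat.mul_succ, Nat.add_comm, ← List.drop_drop,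
        List.drop_left' (by simp [block]), ih, List.drop_succ_cons]

theorem take_morph (w : List (Fin 3)) (k : ℕ) : (morph w).take (19 * k) = morph (w.take k) := by
  induction w generalizing k with
  | nil => simp [morph]
  | cons a w ih =>
    cases k with
    | zero => simp [morph]
    | succ k =>
      rw [morph_cons, Nat.mul_succ, Nat.add_comm, List.take_add, List.take_left' (by simp [block]),
        List.drop_left' (by simp [block]), ih, List.take_succ_cons, morph_cons]

theorem getElem?_morph (w : List (Fin 3)) (p : ℕ) :
    (morph w)[p]? = w[p / 19]?.map (· + block.getD (p % 19) 0) := by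
  obtain ⟨j, r, hr, rfl⟩ : ∃ j r, r < 19 ∧ p = 19 * j + r := ⟨p / 19, p % 19, by omega, by omega⟩
  rw [show (19 * j + r) / 19 = j by omega, show (19 * j + r) % 19 = r by omega,
    ← List.getElem?_drop, drop_morph, show w[j]? = (w.drop j)[0]? by simp]
  have hr : r < block.length := hr
  rcases w.drop j with _ | ⟨a, v⟩
  · simp [morph]
  · rw [morph_cons, List.getElem?_append_left (by simpa using hr), List.getElem?_map,
      List.getElem?_eq_getElem hr, List.getD_eq_getElem _ _ hr]
    simp [add_comm]

/-- Up to shifting letters, the words of length at most 3 without a factor `aa`. -/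
def shortWords : List (List (Fin 3)) :=
  [[0], [0, 1], [0, 2], [0, 1, 2], [0, 1, 0], [0, 2, 0], [0, 2, 1]]

set_option synthInstance.maxSize 2000 in
theorem not_repeatsAt_morph_shortWords : ∀ v ∈ shortWords, ∀ q < 23, ∀ n < 18, ∀ i < 19,
    1 ≤ q → 3 * q < 4 * n → 4 * n ≤ 3 * q + 4 → i + q + n ≤ 19 * v.length →
    ¬ RepeatsAt (morph v) i q n := by
  decide

theorem exists_window_in_blocks :
    ∀ a < 19, ∀ b < 19, ∃ t < 13, (a + t) % 19 ≤ 12 ∧ (b + t) % 19 ≤ 12 := by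
  decide

theorem exists_window_in_blocks_23 :
    ∀ a < 19, ∃ t < 12, (a + t) % 19 ≤ 12 ∧ (a + 23 + t) % 19 ≤ 12 := by
  decide

theorem block_window_injective : ∀ a ≤ 12, ∀ b ≤ 12, ∀ d : Fin 3,
    (∀ j < 7, block.getD (a + j) 0 = block.getD (b + j) 0 + d) → a = b := by
  decide

theorem exists_eq_map_add_of_not_hasPowGt74 {u : List (Fin 3)} (hu : ¬ HasPowGt74 u)
    (h1 : 1 ≤ u.length) (h3 : u.length ≤ 3) : ∃ c, ∃ v ∈ shortWords, u = v.map (c + ·) := by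
  have hne : ∀ j, j + 2 ≤ u.length → u[j]? ≠ u[j + 1]? := fun j hj h =>
    hu (hasPowGt74_of_getElem?_eq hj h)
  suffices u.map (-u.headI + ·) ∈ shortWords from ⟨u.headI, _, this, by simp [List.map_map]⟩
  rcases u with _ | ⟨a, _ | ⟨b, _ | ⟨c, _ | _⟩⟩⟩
  · simp at h1
  · simp [shortWords]
  · have hab : a ≠ b := by simpa using hne 0 (by simp)
    exact (by decide : ∀ a b : Fin 3, a ≠ b → [a, b].map (-a + ·) ∈ shortWords) a b hab
  · have hab : a ≠ b := by simpa using hne 0 (by simp)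
    have hbc : b ≠ c := by simpa using hne 1 (by simp)
    exact (by decide : ∀ a b c : Fin 3, a ≠ b → b ≠ c → [a, b, c].map (-a + ·) ∈ shortWords)
      a b c hab hbc
  · simp only [List.length_cons] at h3; omega

variable {w : List (Fin 3)} {i q n : ℕ}

theorem letter_eq_of_repeatsAt_morph (h : RepeatsAt (morph w) i q n) {p : ℕ} (hi : i ≤ p)
    (hp : p < i + n) : w[p / 19]?.map (· + block.getD (p % 19) 0) =
      w[(p + q) / 19]?.map (· + block.getD ((p + q) % 19) 0) := by
  simpa only [getElem?_morph, show i + (p - i) = p by omega] using h (p - i) (by omega)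

theorem not_repeatsAt_morph_of_lt (hw : ¬ HasPowGt74 w) (hq : 1 ≤ q) (hq23 : q < 23)
    (hqn : 3 * q < 4 * n) (hn : 4 * n ≤ 3 * q + 4) (hlen : i + q + n ≤ 19 * w.length) :
    ¬ RepeatsAt (morph w) i q n := by
  intro h
  set u := (w.drop (i / 19)).take 3 with hu_def
  have hu_len : u.length = min 3 (w.length - i / 19) := by simp [u]
  have hu : RepeatsAt (morph u) (i % 19) q n := by
    rw [hu_def, ← take_morph, ← drop_morph]
    refine (RepeatsAt.drop ?_).take (by omega)
    rwa [Nat.div_add_mod]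
  have hu_free : ¬ HasPowGt74 u := fun h => hw (h.of_infix (w.take_drop_infix _ _))
  obtain ⟨c, v, hv, huv⟩ := exists_eq_map_add_of_not_hasPowGt74 hu_free (by omega) (by omega)
  rw [huv, morph_map_add] at hu
  rw [huv, List.length_map] at hu_len
  exact not_repeatsAt_morph_shortWords v hv q hq23 n (by omega) (i % 19) (by omega) hq hqn hn
    (by omega) (hu.of_map (add_right_injective c))

theorem hasPowGt74_of_repeatsAt_morph_of_dvd (hq : 1 ≤ q) (h19 : 19 ∣ q) (hqn : 3 * q < 4 * n)
    (hlen : i + q + n ≤ 19 * w.length) (h : RepeatsAt (morph w) i q n) : HasPowGt74 w := by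
  obtain ⟨q', rfl⟩ := h19
  set K := (i + 19 * q' + n - 1) / 19 - i / 19 + 1
  refine ⟨i / 19, q', K - q', by omega, by omega, by omega, fun t ht => ?_⟩
  -- a position of the repetition lying in block `i / 19 + t`
  set p := max i (19 * (i / 19 + t)) with hp
  have hletter := letter_eq_of_repeatsAt_morph h (p := p) (le_max_left _ _) (by omega)
  rw [show (p + 19 * q') % 19 = p % 19 by omega, show p / 19 = i / 19 + t by omega,
    show (p + 19 * q') / 19 = i / 19 + t + q' by omega] at hletter
  exact Option.map_injective (add_left_injective _) hletter

open Fin.CommRing in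
theorem not_repeatsAt_morph_of_not_dvd (hq23 : 23 ≤ q) (h19 : ¬ 19 ∣ q) (hqn : 3 * q < 4 * n)
    (hlen : i + q + n ≤ 19 * w.length) : ¬ RepeatsAt (morph w) i q n := by
  intro h
  -- a stretch of 7 positions whose two copies each stay inside one block, at offsets `≤ 12`
  obtain ⟨t, ha, hb, htn⟩ : ∃ t, (i + t) % 19 ≤ 12 ∧ (i + t + q) % 19 ≤ 12 ∧ t + 7 ≤ n := by
    rcases eq_or_lt_of_le hq23 with rfl | h24
    · obtain ⟨t, ht, ha, hb⟩ := exists_window_in_blocks_23 (i % 19) (by omega)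
      exact ⟨t, by omega, by omega, by omega⟩
    · obtain ⟨t, ht, ha, hb⟩ :=
        exists_window_in_blocks (i % 19) (by omega) ((i + q) % 19) (by omega)
      exact ⟨t, by omega, by omega, by omega⟩
  set p := i + t
  have hU : p / 19 < w.length := by omega
  have hV : (p + q) / 19 < w.length := by omega
  have hwindow : ∀ j < 7, block.getD (p % 19 + j) 0 =
      block.getD ((p + q) % 19 + j) 0 + (w[(p + q) / 19] - w[p / 19]) := by
    intro j hj
    have hletter := letter_eq_of_repeatsAt_morph h (p := p + j) (by omega) (by omega)
    rw [show (p + j) / 19 = p / 19 by omega, show (p + j) % 19 = p % 19 + j by omega,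
      show (p + j + q) / 19 = (p + q) / 19 by omega,
      show (p + j + q) % 19 = (p + q) % 19 + j by omega,
      List.getElem?_eq_getElem hU, List.getElem?_eq_getElem hV] at hletter
    simp only [Option.map_some, Option.some.injEq] at hletter
    linear_combination hletter
  have := block_window_injective _ ha _ hb _ hwindow
  omega

theorem not_hasPowGt74_morph (hw : ¬ HasPowGt74 w) : ¬ HasPowGt74 (morph w) := by
  rintro ⟨i, q, n, hq, hlen, hqn, h⟩
  rw [length_morph] at hlen
  rcases lt_or_ge q 23 with hq23 | hq23
  -- it suffices to refute the shortest repetition of period `q` and exponent `> 7/4`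
  · exact not_repeatsAt_morph_of_lt hw hq hq23 (by omega) (by omega) (by omega)
      (h.mono (m := 3 * q / 4 + 1) (by omega))
  by_cases h19 : 19 ∣ q
  · exact hw (hasPowGt74_of_repeatsAt_morph_of_dvd hq h19 hqn hlen h)
  · exact not_repeatsAt_morph_of_not_dvd hq23 h19 hqn hlen h

def word : ℕ → List (Fin 3)
  | 0 => [0]
  | k + 1 => morph (word k)

theorem length_word (k : ℕ) : (word k).length = 19 ^ k := by
  induction k with
  | zero => rfl
  | succ k ih => rw [word, length_morph, ih, pow_succ, mul_comm]

theorem reverse_word (k : ℕ) : (word k).reverse = word k := by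
  induction k with
  | zero => rfl
  | succ k ih => rw [word, reverse_morph, ih]

theorem not_hasPowGt74_word (k : ℕ) : ¬ HasPowGt74 (word k) := by
  induction k with
  | zero =>
    rintro ⟨i, q, n, hq, hlen, hqn, -⟩
    simp only [word, List.length_singleton] at hlen
    omega
  | succ k ih => exact not_hasPowGt74_morph ih

def core : List (Fin 3) := [1, 2, 0, 2, 1, 2, 0, 1, 2, 1, 0, 2, 1, 2, 0, 2, 1]

theorem exists_word_succ_eq_append_core_append (k : ℕ) :
    ∃ a c b, word (k + 1) = a ++ core.map (c + ·) ++ b ∧ a.length = b.length := by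
  have hblock : ∀ c : Fin 3, block.map (c + ·) = [c] ++ core.map (c + ·) ++ [c] := by decide
  have hodd : Odd (word k).length := by rw [length_word]; exact Odd.pow (by decide)
  obtain ⟨x, c, y, hxy, hlen⟩ := List.exists_eq_append_cons_of_odd_length hodd
  refine ⟨morph x ++ [c], c, [c] ++ morph y, ?_, by simp [length_morph, hlen]⟩
  rw [word, hxy, ← List.singleton_append, morph_append, morph_append, morph_cons, hblock]
  simp [morph]

theorem hasPeriod_pow74 : HasPeriod ([1, 2, 0, 2, 1, 2, 0] : List (Fin 3)) 4 := by
  refine ⟨by norm_num, by simp, fun i hi => ?_⟩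
  have hi : i < 3 := by simp only [List.length_cons, List.length_nil] at hi; omega
  interval_cases i <;> rfl

theorem pow74_prefix_core : ([1, 2, 0, 2, 1, 2, 0] : List (Fin 3)) <+: core := by decide

end Dejean

theorem exists_odd_ternary_palindrome_critexp_74 (ℓ : ℕ)
    (hodd : Odd ℓ) (hlen : 17 ≤ ℓ) :
    ∃ w : List (Fin 3), w.length = ℓ ∧ w.reverse = w ∧
      ContainsPowGe w (7 / 4) ∧ ¬ ContainsPowGt w (7 / 4) := by
  obtain ⟨a, c, b, hW, hab⟩ := Dejean.exists_word_succ_eq_append_core_append (ℓ - 1)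
  rw [Nat.sub_add_cancel (by omega)] at hW
  have hℓ : ℓ ≤ (Dejean.word ℓ).length := by
    rw [Dejean.length_word]; exact (Nat.lt_pow_self (by norm_num)).le
  have heven : Even ((Dejean.word ℓ).length - ℓ) := by
    rw [Dejean.length_word]; exact Nat.Odd.sub_odd (Odd.pow (by decide)) hodd
  refine ⟨centralFactor (Dejean.word ℓ) ℓ, length_centralFactor hℓ,
    reverse_centralFactor (Dejean.reverse_word ℓ) hℓ heven, ?_, fun h => ?_⟩
  · have hcore := infix_centralFactor hW hab (by simp [Dejean.core]; omega) hℓ heven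
    refine ⟨_, 4, by simp, ((Dejean.pow74_prefix_core.map (c + ·)).isInfix).trans hcore,
      Dejean.hasPeriod_pow74.map _, ?_⟩
    norm_num
  · exact Dejean.not_hasPowGt74_word ℓ
      ((hasPowGt74_of_containsPowGt h).of_infix (centralFactor_infix _ _))
end

section
/- For every odd integer ℓ ≥ 3, there exists a palindrome of length ℓ over the four-letter alphabet {0,1,2,3} whose critical exponent is exactly 3/2: it contains a factor of length p with period q satisfying p/q ≥ 3/2, but contains no factor of length p with period q satisfying p/q > 3/2. -/
namespace CritAux

/-- Column values of the substitution: `h(a)[j] = C j - a` in `ZMod 4`. -/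
def C : ℕ → ZMod 4
  | 0 => 3 | 1 => 2 | 2 => 0 | 3 => 2 | _ => 3

/-- Alternating digit sum over balanced base-5 digits. -/
def g : ℕ → ZMod 4
  | 0 => 0
  | n+1 => C ((n+3) % 5) - g ((n+3)/5)
  decreasing_by omega

/-- The symmetric bi-infinite word. -/
def H : ℤ → ZMod 4 := fun z => g z.natAbs

lemma Hsymm (z : ℤ) : H (-z) = H z := by simp [H]

lemma gstep (x r : ℕ) (hr : r < 5) (h2 : 2 ≤ 5*x + r) :
    g (5*x + r - 2) = C r - g x := by
  rcases Nat.lt_or_ge (5*x+r) 3 with h | h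
  · have hx : x = 0 := by omega
    have hrr : r = 2 := by omega
    subst hx; subst hrr
    show g 0 = C 2 - g 0
    simp [g, C]
  · obtain ⟨k, hk⟩ : ∃ k, 5*x + r - 2 = k + 1 := ⟨5*x+r-3, by omega⟩
    rw [hk]
    have h5 : k + 3 = 5*x + r := by omega
    rw [g, h5]
    congr 1
    · congr 1; omega
    · congr 1; omega

lemma Csymm (r : ℕ) (hr : r < 5) : C (4 - r) = C r := by
  interval_cases r <;> rfl

lemma Hstep (x : ℤ) (r : ℕ) (hr : r < 5) :
    H (5*x + r - 2) = C r - H x := by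
  rcases le_or_gt 0 (5*x + (r:ℤ) - 2) with hz | hz
  · have hx0 : 0 ≤ x := by omega
    have hnat : (5*x + (r:ℤ) - 2).natAbs = 5 * x.natAbs + r - 2 := by omega
    have h2 : 2 ≤ 5 * x.natAbs + r := by omega
    show g _ = C r - g x.natAbs
    rw [hnat, gstep _ _ hr h2]
  · have hx0 : x ≤ 0 := by omega
    have hnat : (5*x + (r:ℤ) - 2).natAbs = 5 * x.natAbs + (4 - r) - 2 := by omega
    have h2 : 2 ≤ 5 * x.natAbs + (4 - r) := by omega
    show g _ = C r - g x.natAbs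
    rw [hnat, gstep _ _ (by omega) h2, Csymm r hr]

lemma Hwin (n : ℤ) (p : ℕ) (x : ℤ) (hp : p < 5) (hn : n + 2 = 5*x + p) (j : ℕ) :
    H (n + j) = C ((p+j) % 5) - H (x + ((p+j)/5 : ℕ)) := by
  have key : n + (j:ℤ) = 5*(x + ((p+j)/5 : ℕ)) + ((p+j) % 5 : ℕ) - 2 := by
    push_cast
    omega
  rw [key, Hstep _ _ (by omega)]

lemma phase (n : ℤ) : ∃ (p : ℕ) (x : ℤ), p < 5 ∧ n + 2 = 5*x + p :=
  ⟨((n+2) % 5).toNat, (n+2) / 5, by omega, by omega⟩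

lemma adjN : ∀ (N : ℕ) (z : ℤ), z.natAbs = N → H (z+1) ≠ H z := by
  intro N
  induction N using Nat.strong_induction_on with
  | _ N ih =>
    intro z hzN
    obtain ⟨p, x, hp, hn⟩ := phase z
    have h0 : H z = C p - H x := by
      have := Hwin z p x hp hn 0
      simpa [Nat.mod_eq_of_lt hp, Nat.div_eq_of_lt hp] using this
    have h1 : H (z+1) = C ((p+1) % 5) - H (x + ((p+1)/5 : ℕ)) := by
      have := Hwin z p x hp hn 1
      simpa using this
    interval_cases p
    · rw [h0, h1]
      simp only [show ((0+1) % 5 : ℕ) = 1 from rfl, show (((0+1)/5 : ℕ) : ℤ) = 0 from rfl, add_zero]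
      intro h; exact absurd (sub_left_inj.mp h) (by decide)
    · rw [h0, h1]
      simp only [show ((1+1) % 5 : ℕ) = 2 from rfl, show (((1+1)/5 : ℕ) : ℤ) = 0 from rfl, add_zero]
      intro h; exact absurd (sub_left_inj.mp h) (by decide)
    · rw [h0, h1]
      simp only [show ((2+1) % 5 : ℕ) = 3 from rfl, show (((2+1)/5 : ℕ) : ℤ) = 0 from rfl, add_zero]
      intro h; exact absurd (sub_left_inj.mp h) (by decide)
    · rw [h0, h1]
      simp only [show ((3+1) % 5 : ℕ) = 4 from rfl, show (((3+1)/5 : ℕ) : ℤ) = 0 from rfl, add_zero]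
      intro h; exact absurd (sub_left_inj.mp h) (by decide)
    · rw [h0, h1]
      simp only [show ((4+1) % 5 : ℕ) = 0 from rfl, show (((4+1)/5 : ℕ) : ℤ) = 1 from rfl]
      rw [show C 0 = C 4 from rfl]
      intro h
      exact ih x.natAbs (by omega) x rfl (sub_right_inj.mp h)

lemma adj (z : ℤ) : H (z+1) ≠ H z := adjN z.natAbs z rfl

/-- Model of a window spanning two level-up blocks. -/
def L2 (p : ℕ) (a b : ZMod 4) (j : ℕ) : ZMod 4 :=
  C ((p+j) % 5) - (if (p+j)/5 = 0 then a else b)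

/-- Model of a window spanning three level-up blocks. -/
def L3 (p : ℕ) (a b c : ZMod 4) (j : ℕ) : ZMod 4 :=
  C ((p+j) % 5) - (if (p+j)/5 = 0 then a else if (p+j)/5 = 1 then b else c)

lemma D2 : ∀ p : Fin 5, ∀ a b : ZMod 4, b ≠ a →
    ¬(L2 p a b 0 = L2 p a b 2 ∧ L2 p a b 1 = L2 p a b 3) := by decide

lemma D3 : ∀ p : Fin 5, ∀ a b : ZMod 4, b ≠ a →
    ¬(L2 p a b 0 = L2 p a b 3 ∧ L2 p a b 1 = L2 p a b 4) := by decide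

lemma D31 : ∀ p : Fin 5, ∀ a b : ZMod 4,
    ¬(L2 p a b 1 - L2 p a b 0 = 3 ∧ L2 p a b 2 - L2 p a b 1 = 1) := by decide

lemma D4 : ∀ p : Fin 5, ∀ a b c : ZMod 4, b ≠ a → c ≠ b → ¬(b - a = 3 ∧ c - b = 1) →
    ¬(L3 p a b c 0 = L3 p a b c 4 ∧ L3 p a b c 1 = L3 p a b c 5 ∧
      L3 p a b c 2 = L3 p a b c 6) := by decide

lemma Drec : ∀ p p' : Fin 5, p ≠ p' → ∀ a b a' b' : ZMod 4, b ≠ a → b' ≠ a' →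
    ¬(∀ i : Fin 4, L2 p a b i = L2 p' a' b' i) := by decide

lemma Hwin2 (n : ℤ) (p : ℕ) (x : ℤ) (hp : p < 5) (hn : n + 2 = 5*x + p)
    (j : ℕ) (hj : j ≤ 4) :
    H (n + j) = L2 p (H x) (H (x+1)) j := by
  rw [Hwin n p x hp hn j, L2]
  rcases (show (p+j)/5 = 0 ∨ (p+j)/5 = 1 by omega) with h | h <;>
    rw [h] <;> simp

lemma Hwin3 (n : ℤ) (p : ℕ) (x : ℤ) (hp : p < 5) (hn : n + 2 = 5*x + p)
    (j : ℕ) (hj : j ≤ 7) :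
    H (n + j) = L3 p (H x) (H (x+1)) (H (x+2)) j := by
  rw [Hwin n p x hp hn j, L3]
  rcases (show (p+j)/5 = 0 ∨ (p+j)/5 = 1 ∨ (p+j)/5 = 2 by omega) with h | h | h <;>
    rw [h] <;> norm_num

lemma pair31 (x : ℤ) : ¬(H (x+1) - H x = 3 ∧ H (x+2) - H (x+1) = 1) := by
  obtain ⟨p, y, hp, hn⟩ := phase x
  have e0 : H (x + (0:ℕ)) = L2 p (H y) (H (y+1)) 0 := Hwin2 x p y hp hn 0 (by omega)
  have e1 : H (x + (1:ℕ)) = L2 p (H y) (H (y+1)) 1 := Hwin2 x p y hp hn 1 (by omega)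
  have e2 : H (x + (2:ℕ)) = L2 p (H y) (H (y+1)) 2 := Hwin2 x p y hp hn 2 (by omega)
  push_cast at e0 e1 e2
  rw [add_zero] at e0
  rw [e0, e1, e2]
  exact D31 ⟨p, hp⟩ (H y) (H (y+1))

lemma no2 (n : ℤ) : ¬(H n = H (n+2) ∧ H (n+1) = H (n+3)) := by
  obtain ⟨p, y, hp, hn⟩ := phase n
  have e : ∀ j : ℕ, j ≤ 4 → H (n + (j:ℤ)) = L2 p (H y) (H (y+1)) j := by
    intro j hj
    have := Hwin2 n p y hp hn j hj
    push_cast at this ⊢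
    exact this
  have e0 := e 0 (by omega); have e1 := e 1 (by omega)
  have e2 := e 2 (by omega); have e3 := e 3 (by omega)
  push_cast at e0 e1 e2 e3
  rw [add_zero] at e0
  rw [e0, e1, e2, e3]
  exact D2 ⟨p, hp⟩ (H y) (H (y+1)) (adj y)

lemma no3 (n : ℤ) : ¬(H n = H (n+3) ∧ H (n+1) = H (n+4)) := by
  obtain ⟨p, y, hp, hn⟩ := phase n
  have e : ∀ j : ℕ, j ≤ 4 → H (n + (j:ℤ)) = L2 p (H y) (H (y+1)) j := by
    intro j hj
    have := Hwin2 n p y hp hn j hj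
    push_cast at this ⊢
    exact this
  have e0 := e 0 (by omega); have e1 := e 1 (by omega)
  have e3 := e 3 (by omega); have e4 := e 4 (by omega)
  push_cast at e0 e1 e3 e4
  rw [add_zero] at e0
  rw [e0, e1, e3, e4]
  exact D3 ⟨p, hp⟩ (H y) (H (y+1)) (adj y)

lemma no4 (n : ℤ) : ¬(H n = H (n+4) ∧ H (n+1) = H (n+5) ∧ H (n+2) = H (n+6)) := by
  obtain ⟨p, y, hp, hn⟩ := phase n
  have e : ∀ j : ℕ, j ≤ 7 → H (n + (j:ℤ)) = L3 p (H y) (H (y+1)) (H (y+2)) j := by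
    intro j hj
    have := Hwin3 n p y hp hn j hj
    push_cast at this ⊢
    exact this
  have e0 := e 0 (by omega); have e1 := e 1 (by omega); have e2 := e 2 (by omega)
  have e4 := e 4 (by omega); have e5 := e 5 (by omega); have e6 := e 6 (by omega)
  push_cast at e0 e1 e2 e4 e5 e6
  rw [add_zero] at e0
  rw [e0, e1, e2, e4, e5, e6]
  refine D4 ⟨p, hp⟩ (H y) (H (y+1)) (H (y+2)) (adj y) ?_ ?_
  · have := adj (y+1); rwa [show y+1+1 = y+2 by ring] at this
  · have := pair31 y
    tauto

lemma norec (n : ℤ) (q : ℕ) (hq5 : ¬ (5 ∣ q))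
    (hm : ∀ i : ℕ, i < 4 → H (n + i) = H (n + i + q)) : False := by
  obtain ⟨p, y, hp, hn⟩ := phase n
  obtain ⟨p', y', hp', hn'⟩ := phase (n + q)
  have hpp : p ≠ p' := by omega
  have e : ∀ j : ℕ, j ≤ 4 → H (n + (j:ℤ)) = L2 p (H y) (H (y+1)) j := by
    intro j hj; have := Hwin2 n p y hp hn j hj; push_cast at this ⊢; exact this
  have e' : ∀ j : ℕ, j ≤ 4 → H (n + q + (j:ℤ)) = L2 p' (H y') (H (y'+1)) j := by
    intro j hj; have := Hwin2 (n+q) p' y' hp' hn' j hj; push_cast at this ⊢; exact this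
  refine Drec ⟨p, hp⟩ ⟨p', hp'⟩ (by simpa using hpp) (H y) (H (y+1)) (H y') (H (y'+1))
    (adj y) (adj y') ?_
  intro i
  have hi : (i : ℕ) ≤ 4 := by omega
  have h1 := e i hi
  have h2 := e' i hi
  have h3 := hm i (by omega)
  rw [← h1, ← h2]
  rw [show n + (q:ℤ) + (i:ℕ) = n + (i:ℕ) + q by ring]
  exact h3

lemma pull (x q' : ℤ) (r : ℕ) (hr : r < 5)
    (h : H (5*x + r - 2) = H (5*(x+q') + r - 2)) : H x = H (x + q') := by
  rw [Hstep x r hr, Hstep (x+q') r hr] at h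
  exact sub_right_inj.mp h

/-- The key avoidance theorem: `H` contains no repetition of exponent
exceeding `3/2`: any match of length `m` at distance `q` has `2m ≤ q`. -/
theorem noMatch : ∀ q : ℕ, 1 ≤ q → ∀ n : ℤ, ∀ m : ℕ,
    (∀ i : ℕ, i < m → H (n + i) = H (n + i + q)) → 2*m ≤ q := by
  intro q
  induction q using Nat.strong_induction_on with
  | _ q ih =>
    intro hq n m hmatch
    by_contra hcon
    push_neg at hcon
    rcases (show q = 1 ∨ q = 2 ∨ q = 3 ∨ q = 4 ∨ 5 ≤ q by omega) with h|h|h|h|h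
    · subst h
      have := hmatch 0 (by omega)
      push_cast at this
      rw [add_zero] at this
      exact adj n this.symm
    · subst h
      have h0 := hmatch 0 (by omega); have h1 := hmatch 1 (by omega)
      push_cast at h0 h1
      rw [add_zero] at h0
      exact no2 n ⟨h0, by rw [show n+1+2 = n+3 by ring] at h1; exact h1⟩
    · subst h
      have h0 := hmatch 0 (by omega); have h1 := hmatch 1 (by omega)
      push_cast at h0 h1
      rw [add_zero] at h0
      exact no3 n ⟨h0, by rw [show n+1+3 = n+4 by ring] at h1; exact h1⟩
    · subst h
      have h0 := hmatch 0 (by omega); have h1 := hmatch 1 (by omega)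
      have h2 := hmatch 2 (by omega)
      push_cast at h0 h1 h2
      rw [add_zero] at h0
      exact no4 n ⟨h0, by rw [show n+1+4 = n+5 by ring] at h1; exact h1,
        by rw [show n+2+4 = n+6 by ring] at h2; exact h2⟩
    · by_cases h5 : 5 ∣ q
      · obtain ⟨q', rfl⟩ := h5
        have hq' : 1 ≤ q' := by omega
        set x0 : ℤ := (n+2) / 5 with hx0
        set xm : ℤ := (n + (m:ℤ) + 1) / 5 with hxm
        set mb : ℕ := (xm - x0).toNat + 1 with hmb
        have hblock : ∀ j : ℕ, j < mb → H (x0 + j) = H (x0 + j + q') := by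
          intro j hj
          set X : ℤ := x0 + j with hX
          set u : ℤ := max n (5*X - 2) with hu
          have hXm : X ≤ xm := by omega
          have hun : n ≤ u := le_max_left _ _
          have hum : u ≤ n + m - 1 := by omega
          have hur : u + 2 - 5*X < 5 ∧ 0 ≤ u + 2 - 5*X := by omega
          set r : ℕ := (u + 2 - 5*X).toNat with hr
          have hr5 : r < 5 := by omega
          have huX : u = 5*X + r - 2 := by omega
          have hi := hmatch (u - n).toNat (by omega)
          rw [show n + ((u-n).toNat : ℤ) = u by omega] at hi
          have hi2 : H (5*X + r - 2) = H (5*(X+(q':ℤ)) + r - 2) := by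
            rw [← huX, show 5*(X+(q':ℤ)) + r - 2 = u + ((5*q' : ℕ) : ℤ) by push_cast; omega]
            exact hi
          exact pull X q' r hr5 hi2
        have hIH := ih q' (by omega) (by omega) (x0) mb (by
          intro j hj
          have := hblock j hj
          rwa [show x0 + (j:ℤ) + (q':ℕ) = x0 + j + q' by push_cast; ring])
        omega
      · have hm4 : 4 ≤ m := by omega
        exact norec n q (by omega) (fun i hi => hmatch i (by omega))

end CritAux

theorem exists_odd_quaternary_palindrome_critexp_32 (ℓ : ℕ)
    (hodd : Odd ℓ) (hlen : 3 ≤ ℓ) :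
    ∃ w : List (Fin 4), w.length = ℓ ∧ w.reverse = w ∧
      ContainsPowGe w (3 / 2) ∧ ¬ ContainsPowGt w (3 / 2) := by
  obtain ⟨c, hc⟩ := hodd
  have hc1 : 1 ≤ c := by omega
  set f : ℕ → Fin 4 := fun i => CritAux.H ((i:ℤ) - c) with hf
  set w : List (Fin 4) := (List.range ℓ).map f with hw
  have hwlen : w.length = ℓ := by simp [hw]
  have hwget : ∀ (j : ℕ), j < ℓ → w[j]? = some (f j) := by
    intro j h
    rw [hw, List.getElem?_map, List.getElem?_range h]
    rfl
  refine ⟨w, hwlen, ?_, ?_, ?_⟩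
  · -- palindrome
    have hwgetE : ∀ (j : ℕ) (h : j < w.length), w[j] = f j := by
      intro j h
      simp [hw]
    apply List.ext_getElem (by simp)
    intro i h1 h2
    rw [List.getElem_reverse, hwgetE, hwgetE]
    have hi : i < ℓ := by rwa [hwlen] at h2
    have harg : ((w.length - 1 - i : ℕ) : ℤ) - c = -((i:ℤ) - c) := by
      rw [hwlen]
      push_cast
      omega
    show CritAux.H _ = CritAux.H _
    rw [harg, CritAux.Hsymm]
  · -- contains a 3/2-power: the center triple
    set x : List (Fin 4) := (w.drop (c-1)).take 3 with hx
    have hxlen : x.length = 3 := by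
      simp only [hx, List.length_take, List.length_drop, hwlen]
      omega
    have hxget : ∀ j : ℕ, j < 3 → x[j]? = some (f (c - 1 + j)) := by
      intro j hj
      rw [hx, List.getElem?_take_of_lt hj, List.getElem?_drop, hwget _ (by omega)]
    refine ⟨x, 2, by intro hh; rw [hh] at hxlen; simp at hxlen, ?_, ⟨by omega, by omega, ?_⟩, ?_⟩
    · refine ⟨w.take (c-1), (w.drop (c-1)).drop 3, ?_⟩
      rw [hx, List.append_assoc, List.take_append_drop 3 (w.drop (c-1)),
        List.take_append_drop]
    · intro i hi
      rw [hxlen] at hi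
      have hi0 : i = 0 := by omega
      subst hi0
      rw [hxget 0 (by omega), hxget 2 (by omega)]
      congr 1
      show CritAux.H _ = CritAux.H _
      have h1 : ((c - 1 + 0 : ℕ) : ℤ) - c = -(1:ℤ) := by push_cast; omega
      have h2 : ((c - 1 + 2 : ℕ) : ℤ) - c = (1:ℤ) := by push_cast; omega
      rw [h1, h2, CritAux.Hsymm]
    · rw [hxlen]
      norm_num
  · -- contains no (3/2)⁺-power
    rintro ⟨x, q, hne, ⟨s, t, hst⟩, ⟨hq1, hqle, hper⟩, hgt⟩
    set p : ℕ := x.length with hp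
    have hq0 : (0:ℚ) < (q:ℚ) := by exact_mod_cast hq1
    rw [div_lt_div_iff₀ (by norm_num) hq0] at hgt
    have h32 : 3 * q < 2 * p := by exact_mod_cast (by linarith : (3*q : ℚ) < 2*p)
    have hlensum : s.length + p + t.length = ℓ := by
      have h := congrArg List.length hst
      simp only [List.length_append, hwlen] at h
      omega
    have hxw : ∀ i : ℕ, i < p → x[i]? = some (f (s.length + i)) := by
      intro i hi
      have h1 : (s ++ x ++ t)[s.length + i]? = x[i]? := by
        rw [List.append_assoc, List.getElem?_append_right (by omega),
          Nat.add_sub_cancel_left, List.getElem?_append_left (by omega)]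
      rw [← h1, hst, hwget _ (by omega)]
    set n0 : ℤ := (s.length : ℤ) - c with hn0
    have hmatch : ∀ i : ℕ, i < p - q → CritAux.H (n0 + i) = CritAux.H (n0 + i + q) := by
      intro i hi
      have hperi := hper i (by omega)
      rw [hxw i (by omega), hxw (i+q) (by omega)] at hperi
      have heq : f (s.length + i) = f (s.length + (i + q)) := Option.some.inj hperi
      have e1 : CritAux.H (((s.length + i : ℕ) : ℤ) - c)
          = CritAux.H (((s.length + (i + q) : ℕ) : ℤ) - c) := heq
      have harg1 : ((s.length + i : ℕ) : ℤ) - c = n0 + i := by push_cast; ring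
      have harg2 : ((s.length + (i + q) : ℕ) : ℤ) - c = n0 + i + q := by push_cast; ring
      rw [harg1, harg2] at e1
      exact e1
    have := CritAux.noMatch q hq1 n0 (p - q) hmatch
    omega
end

section
/- Let h be the 11-uniform morphism on {0,1,2,3} defined by h(0) = 01312021310, h(1) = 12023132021, h(2) = 23130203132, h(3) = 30201310203. The infinite fixed point h^ω(0) of h (obtained by iterating h starting from 0) contains no factor of length p with period q satisfying p/q > 3/2. -/
/-- The 11-uniform palindromic morphism on {0,1,2,3}. -/
def hmor : List (Fin 4) → List (Fin 4) :=
  fun w => w.flatMap (fun a =>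
    if a = 0 then [0, 1, 3, 1, 2, 0, 2, 1, 3, 1, 0]
    else if a = 1 then [1, 2, 0, 2, 3, 1, 3, 2, 0, 2, 1]
    else if a = 2 then [2, 3, 1, 3, 0, 2, 0, 3, 1, 3, 2]
    else [3, 0, 2, 0, 1, 3, 1, 0, 2, 0, 3])


/-!
Every image `h(a)` begins and ends with `a`, and `h` is synchronizing: `h(a)` occurs in `h(b)h(c)`
only at offsets `0` and `11`. A factor of `h^ω(0)` with period `q ≥ 41` and exponent `> 3/2` is at
least `q + 21` long, so it contains a full block `h(a)` together with its shift by `q`, which forces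
`11 ∣ q`; reading the letters at block boundaries then gives a factor with period `q / 11` and
still exponent `> 3/2`. Descending, we reach `q ≤ 40`. Such a factor only needs its first
`q + ⌊q/2⌋ + 1 ≤ 61` letters, which lie in `h²(ab)` for two adjacent letters `a ≠ b`. As `h`
commutes with the cyclic shift `x ↦ x + 1` of the alphabet we may take `a = 0`, and the three
words `h²(0b)` are checked by computation.
-/

section UniformMorphism

variable {α : Type*} {k : ℕ}

def uniformMorphism (τ : α → Fin k → α) (w : List α) : List α :=
  w.flatMap fun a => List.ofFn (τ a)

theorem commute_map_uniformMorphism {τ : α → Fin k → α} {f : α → α}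
    (hf : ∀ a r, τ (f a) r = f (τ a r)) : Function.Commute (List.map f) (uniformMorphism τ) := by
  intro w
  simp only [uniformMorphism, List.map_flatMap, List.flatMap_map, List.map_ofFn, Function.comp_def,
    ← hf]

def factor (W : ℕ → α) (i p : ℕ) : List α :=
  (List.range p).map fun j => W (i + j)

theorem getElem?_factor (W : ℕ → α) {i p t : ℕ} (ht : t < p) :
    (factor W i p)[t]? = some (W (i + t)) := by
  simp [factor, ht]

variable [NeZero k]

theorem getElem?_uniformMorphism (τ : α → Fin k → α) (w : List α) (m : ℕ) :
    (uniformMorphism τ w)[m]? = w[m / k]?.map (τ · (Fin.ofNat k m)) := by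
  induction w generalizing m with
  | nil => simp [uniformMorphism]
  | cons a w ih =>
    rw [uniformMorphism, List.flatMap_cons, ← uniformMorphism]
    rcases lt_or_ge m k with hm | hm
    · have hmk : Fin.ofNat k m = ⟨m, hm⟩ := Fin.ext (Nat.mod_eq_of_lt hm)
      rw [List.getElem?_append_left (by simpa using hm), List.getElem?_ofFn, dif_pos hm,
        Nat.div_eq_of_lt hm, hmk]
      rfl
    · obtain ⟨m, rfl⟩ := Nat.exists_eq_add_of_le' hm
      have hmk : Fin.ofNat k (m + k) = Fin.ofNat k m := Fin.ext (Nat.add_mod_right m k)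
      rw [List.getElem?_append_right (by simp), List.length_ofFn, Nat.add_sub_cancel, ih,
        Nat.add_div_right _ (NeZero.pos k), hmk]
      rfl

/-- The infinite word `W` is a fixed point of the morphism `uniformMorphism τ`. -/
def IsUniformFixedPoint (τ : α → Fin k → α) (W : ℕ → α) : Prop :=
  ∀ m, W m = τ (W (m / k)) (Fin.ofNat k m)

theorem isUniformFixedPoint_of_iterate {τ : α → Fin k → α} {W : ℕ → α} {a : α} (hk : 1 < k)
    (hW : ∀ n, (List.range (k ^ n)).map W = (uniformMorphism τ)^[n] [a]) :
    IsUniformFixedPoint τ W := by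
  intro m
  have hm : m < k ^ m := Nat.lt_pow_self hk
  have hmk : m < k ^ (m + 1) := hm.trans (Nat.pow_lt_pow_right hk m.lt_succ_self)
  have key := congrArg (·[m]?) (hW (m + 1))
  simp only [Function.iterate_succ_apply', ← hW m, getElem?_uniformMorphism] at key
  simpa [hmk, (Nat.div_le_self m k).trans_lt hm] using key

namespace IsUniformFixedPoint

variable {τ : α → Fin k → α} {W : ℕ → α} (hW : IsUniformFixedPoint τ W)
include hW

theorem apply_mul_add (K u : ℕ) : W (k * K + u) = τ (W (K + u / k)) (Fin.ofNat k u) := by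
  rw [hW, Nat.mul_add_div (NeZero.pos k)]
  congr 1
  ext
  simp

theorem uniformMorphism_factor (K len : ℕ) :
    uniformMorphism τ (factor W K len) = factor W (k * K) (k * len) := by
  apply List.ext_getElem?
  intro m
  rw [getElem?_uniformMorphism]
  simp only [factor, List.getElem?_map]
  by_cases hm : m < k * len
  · rw [List.getElem?_range hm, List.getElem?_range (Nat.div_lt_of_lt_mul hm)]
    exact congrArg some (hW.apply_mul_add K m).symm
  · have hmk : len ≤ m / k := (Nat.le_div_iff_mul_le (NeZero.pos k)).2 (by linarith)
    rw [List.getElem?_eq_none (by simpa using hmk), List.getElem?_eq_none (by simpa using hm)]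
    rfl

theorem iterate_uniformMorphism_factor (n K len : ℕ) :
    (uniformMorphism τ)^[n] (factor W K len) = factor W (k ^ n * K) (k ^ n * len) := by
  induction n with
  | zero => simp
  | succ n ih =>
    rw [Function.iterate_succ_apply', ih, hW.uniformMorphism_factor, pow_succ', mul_assoc,
      mul_assoc]

end IsUniformFixedPoint

end UniformMorphism

section Periods

variable {α : Type*}

def agreements [DecidableEq α] (L : List α) (q : ℕ) : List Bool :=
  List.zipWith (fun x y => decide (x = y)) L (L.drop q)

theorem agreements_map [DecidableEq α] {f : α → α} (hf : Function.Injective f) (L : List α)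
    (q : ℕ) : agreements (L.map f) q = agreements L q := by
  simp [agreements, ← List.map_drop, List.zipWith_map, hf.eq_iff]

theorem replicate_true_infix_agreements [DecidableEq α] {L : List α} {q s w : ℕ}
    (hs : s + w + q ≤ L.length) (h : ∀ t < w, L[s + t]? = L[s + t + q]?) :
    List.replicate w true <:+: agreements L q := by
  rw [List.infix_iff_getElem?]
  refine ⟨s, by simp [agreements]; omega, fun t ht => ?_⟩
  rw [List.length_replicate] at ht
  have h1 : s + t < L.length := by omega
  have h2 : s + t + q < L.length := by omega
  have hL := h t ht
  rw [List.getElem?_eq_getElem h1, List.getElem?_eq_getElem h2, Option.some_inj] at hL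
  simp [agreements, List.getElem?_zipWith, Nat.add_comm t s, Nat.add_comm q,
    List.getElem?_eq_getElem h1, List.getElem?_eq_getElem h2, hL]

def FactorHasPeriod (W : ℕ → α) (i p q : ℕ) : Prop :=
  ∀ t, t + q < p → W (i + t) = W (i + t + q)

theorem HasPeriod.factorHasPeriod {W : ℕ → α} {i p q : ℕ} (h : HasPeriod (factor W i p) q) :
    FactorHasPeriod W i p q := by
  intro t ht
  have := h.2.2 t (by simpa [factor] using ht)
  rwa [getElem?_factor _ (by omega), getElem?_factor _ ht, Option.some_inj, ← add_assoc] at this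

theorem FactorHasPeriod.decimate {W : ℕ → α} {i p q : ℕ}
    (h0 : ∀ m, W (11 * m) = W m) (h10 : ∀ m, W (11 * m + 10) = W m) (hp : 11 * q + 10 < p)
    (h : FactorHasPeriod W i p (11 * q)) : FactorHasPeriod W (i / 11) ((p + 10) / 11) q := by
  intro t ht
  rcases t with _ | t
  · have := h (11 * (i / 11) + 10 - i) (by omega)
    rwa [show i + (11 * (i / 11) + 10 - i) = 11 * (i / 11) + 10 by omega,
      show 11 * (i / 11) + 10 + 11 * q = 11 * (i / 11 + 0 + q) + 10 by omega, h10, h10] at this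
  · have := h (11 * (i / 11 + t + 1) - i) (by omega)
    rwa [show i + (11 * (i / 11 + t + 1) - i) = 11 * (i / 11 + (t + 1)) by omega,
      show 11 * (i / 11 + (t + 1)) + 11 * q = 11 * (i / 11 + (t + 1) + q) by omega, h0, h0] at this

end Periods

def hmorLetter (a : Fin 4) (r : Fin 11) : Fin 4 :=
  a + ![0, 1, 3, 1, 2, 0, 2, 1, 3, 1, 0] r

theorem hmor_eq_uniformMorphism : hmor = uniformMorphism hmorLetter := by
  funext w
  unfold hmor uniformMorphism
  congr
  funext a
  fin_cases a <;> rfl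

theorem hmorLetter_add (a c : Fin 4) (r : Fin 11) : hmorLetter (a + c) r = hmorLetter a r + c :=
  add_right_comm _ _ _

theorem hmorLetter_zero (a : Fin 4) : hmorLetter a 0 = a := by
  simp [hmorLetter]

theorem hmorLetter_ten (a : Fin 4) : hmorLetter a 10 = a := by
  simp [hmorLetter]

theorem hmorLetter_ne_succ :
    ∀ (a : Fin 4) (r : Fin 11), r ≠ 10 → hmorLetter a r ≠ hmorLetter a (r + 1) := by
  decide

/-- `h(a)` does not occur in `h(b)h(c)` at an offset `r` strictly between `0` and `11`. -/
theorem hmorLetter_sync : ∀ (a b c : Fin 4) (r : Fin 11), r ≠ 0 →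
    ∃ j : Fin 11, hmorLetter a j ≠ hmorLetter (if j.val + r.val < 11 then b else c) (j + r) := by
  decide

/-- No factor of `h²(0b)` has a period `q ≤ 40` and length at least `q + ⌊q/2⌋ + 1`. -/
theorem not_replicate_infix_agreements_hmor : ∀ b : Fin 4, b ≠ 0 → ∀ q < 41, 0 < q →
    ¬ List.replicate (q / 2 + 1) true <:+: agreements (hmor^[2] [0, b]) q := by
  decide +kernel

namespace IsUniformFixedPoint

variable {W : ℕ → Fin 4} (hW : IsUniformFixedPoint hmorLetter W)
include hW

theorem apply_eleven_mul (m : ℕ) : W (11 * m) = W m := by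
  simpa [hmorLetter_zero] using hW.apply_mul_add m 0

theorem apply_eleven_mul_add_ten (m : ℕ) : W (11 * m + 10) = W m := by
  simpa [hmorLetter_ten] using hW.apply_mul_add m 10

theorem apply_ne_apply_succ (m : ℕ) : W m ≠ W (m + 1) := by
  induction m using Nat.strong_induction_on with
  | _ m ih =>
  by_cases hr : m % 11 = 10
  · obtain ⟨K, rfl⟩ : ∃ K, m = 11 * K + 10 := ⟨m / 11, by omega⟩
    rw [hW.apply_eleven_mul_add_ten, show 11 * K + 10 + 1 = 11 * (K + 1) by ring,
      hW.apply_eleven_mul]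
    exact ih K (by omega)
  · have hsucc : Fin.ofNat 11 (m + 1) = Fin.ofNat 11 m + 1 := Fin.ext (by simp [Fin.val_add])
    rw [hW m, hW (m + 1), show (m + 1) / 11 = m / 11 by omega, hsucc]
    exact hmorLetter_ne_succ _ _ (fun h => hr (by simpa [Fin.ext_iff] using h))

theorem eleven_dvd_of_factorHasPeriod {i p q : ℕ} (hp : q + 20 < p)
    (h : FactorHasPeriod W i p q) : 11 ∣ q := by
  by_contra hq
  -- the block `h(W K)` starting at `11 * K` and its shift by `q` both lie in the factor
  set K := (i + 10) / 11
  obtain ⟨j, hj⟩ := hmorLetter_sync (W K) (W (K + q / 11)) (W (K + q / 11 + 1)) (Fin.ofNat 11 q)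
    (by simpa [Fin.ext_iff, Nat.dvd_iff_mod_eq_zero] using hq)
  apply hj
  have hper := h (11 * K + j - i) (by omega)
  rw [show i + (11 * K + j - i) = 11 * K + j by omega,
    show 11 * K + j + q = 11 * (K + q / 11) + (j + q % 11) by omega,
    hW.apply_mul_add, hW.apply_mul_add] at hper
  have hjj : Fin.ofNat 11 j = j := Fin.ext (Nat.mod_eq_of_lt j.isLt)
  have hsum : Fin.ofNat 11 (j + q % 11) = j + Fin.ofNat 11 q := Fin.ext (by simp [Fin.val_add])
  rw [Nat.div_eq_of_lt j.isLt, add_zero, hjj, hsum] at hper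
  rw [hper, Fin.val_ofNat]
  congr 2
  split_ifs with hc
  · rw [Nat.div_eq_of_lt hc, add_zero]
  · rw [show (j + q % 11) / 11 = 1 by omega]

theorem two_mul_le_three_mul_of_le_forty {i p q : ℕ} (hq0 : 0 < q) (hq : q ≤ 40)
    (h : FactorHasPeriod W i p q) : 2 * p ≤ 3 * q := by
  by_contra! hpq
  set K := i / 121
  set b := W (K + 1) - W K
  have hL : agreements (hmor^[2] [0, b]) q = agreements (factor W (11 ^ 2 * K) (11 ^ 2 * 2)) q := by
    have hKb : factor W K 2 = [0, b].map (· + W K) := by simp [factor, b, List.range_succ]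
    rw [← hW.iterate_uniformMorphism_factor, hKb,
      ← ((commute_map_uniformMorphism fun a r => hmorLetter_add a (W K) r).iterate_right 2) _,
      agreements_map (add_left_injective _), hmor_eq_uniformMorphism]
  refine not_replicate_infix_agreements_hmor b (sub_ne_zero.2 (hW.apply_ne_apply_succ K).symm) q
    (by omega) hq0 (hL ▸ replicate_true_infix_agreements (s := i % 121) (by simp [factor]; omega)
      fun t ht => ?_)
  rw [getElem?_factor _ (by omega), getElem?_factor _ (by omega),
    show 11 ^ 2 * K + (i % 121 + t) = i + t by omega,
    show 11 ^ 2 * K + (i % 121 + t + q) = i + t + q by omega, h t (by omega)]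

theorem two_mul_le_three_mul {i p q : ℕ} (hq : 0 < q) (h : FactorHasPeriod W i p q) :
    2 * p ≤ 3 * q := by
  induction q using Nat.strong_induction_on generalizing i p with
  | _ q ih =>
  rcases le_or_gt q 40 with hq40 | hq40
  · exact hW.two_mul_le_three_mul_of_le_forty hq hq40 h
  by_contra! hpq
  obtain ⟨q', rfl⟩ := hW.eleven_dvd_of_factorHasPeriod (by omega) h
  have := ih q' (by omega) (by omega)
    (h.decimate hW.apply_eleven_mul hW.apply_eleven_mul_add_ten (by omega))
  omega

end IsUniformFixedPoint

/-- The fixed point `h^ω(0)`, described as the infinite word `W` whose prefix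
of length `11^n` is `h^n(0)` for every `n`, avoids `(3/2)⁺`-powers. -/
theorem hmor_fixed_point_avoids_32_plus (W : ℕ → Fin 4)
    (hW : ∀ n : ℕ, (List.range (11 ^ n)).map W = (hmor^[n]) [0]) :
    ∀ x : List (Fin 4),
      (∃ i : ℕ, x = (List.range x.length).map (fun j => W (i + j))) →
      ∀ q : ℕ, HasPeriod x q → (x.length : ℚ) / (q : ℚ) ≤ 3 / 2 := by
  rw [hmor_eq_uniformMorphism] at hW
  have hfix := isUniformFixedPoint_of_iterate (by norm_num) hW
  rintro x ⟨i, hx⟩ q hP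
  rw [hx] at hP
  have := hfix.two_mul_le_three_mul hP.1 hP.factorHasPeriod
  rw [div_le_div_iff₀ (by exact_mod_cast hP.1) (by norm_num)]
  exact_mod_cast (by omega : x.length * 2 ≤ 3 * q)
end

section
/- Let h be the 11-uniform morphism on {0,1,2,3} defined by h(0) = 01312021310, h(1) = 12023132021, h(2) = 23130203132, h(3) = 30201310203, and let h^ω(0) be its infinite fixed point starting from 0. Every factor of h^ω(0) that has length p and period q with p/q = 3/2 has length of the form a·11^i for some i ≥ 0 and some a ∈ {3, 6, 9, 12}. -/
def window {α : Type*} (W : ℕ → α) (i n : ℕ) : List α :=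
  (List.range n).map fun j => W (i + j)

section Window

variable {α : Type*} (W : ℕ → α)

@[simp]
theorem length_window (i n : ℕ) : (window W i n).length = n := by
  simp [window]

theorem getElem?_window_of_lt {i n j : ℕ} (hj : j < n) :
    (window W i n)[j]? = some (W (i + j)) := by
  simp [window, hj]

theorem window_one (i : ℕ) : window W i 1 = [W i] := by
  simp [window]

theorem window_two (i : ℕ) : window W i 2 = [W i, W (i + 1)] := by
  simp [window, List.range_succ]

theorem window_add (i a b : ℕ) : window W i (a + b) = window W i a ++ window W (i + a) b := by
  simp [window, List.range_add, Nat.add_assoc]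

theorem take_drop_window {i n a b : ℕ} (h : a + b ≤ n) :
    ((window W i n).drop a).take b = window W (i + a) b := by
  refine List.ext_getElem? fun j => ?_
  by_cases hj : j < b
  · rw [List.getElem?_take, if_pos hj, List.getElem?_drop, getElem?_window_of_lt _ (by omega),
      getElem?_window_of_lt _ hj, Nat.add_assoc]
  · rw [List.getElem?_take, if_neg hj, List.getElem?_eq_none (by simp; omega)]

theorem window_eq_window_iff {i i' n : ℕ} :
    window W i n = window W i' n ↔ ∀ j < n, W (i + j) = W (i' + j) := by
  simp [window, List.map_inj_left]

end Window

theorem HasPeriod.apply_eq_of_window {α : Type*} {W : ℕ → α} {i n q j : ℕ}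
    (h : HasPeriod (window W i n) q) (hj : j + q < n) : W (i + j) = W (i + q + j) := by
  have := h.2.2 j (by simpa using hj)
  rwa [getElem?_window_of_lt _ (by omega), getElem?_window_of_lt _ hj, Option.some_inj,
    ← Nat.add_assoc, Nat.add_right_comm] at this

theorem Nat.exists_le_mul_lt_add {L : ℕ} (hL : 0 < L) (i : ℕ) :
    ∃ m, i ≤ L * m ∧ L * m < i + L := by
  refine ⟨(i + L - 1) / L, ?_⟩
  have := Nat.div_add_mod (i + L - 1) L
  have := Nat.mod_lt (i + L - 1) hL
  omega

-- `k` is a third of the length: the factor of length `3 * k` at `i` has period `2 * k`.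
def HasThreeHalvesPower {α : Type*} (W : ℕ → α) (k : ℕ) : Prop :=
  ∃ i, ∀ j < k, W (i + j) = W (i + 2 * k + j)

theorem HasThreeHalvesPower.of_mul_left {α : Type*} {W : ℕ → α} {L k : ℕ} (hL : 0 < L)
    (hW : ∀ m, W (L * m) = W m) (h : HasThreeHalvesPower W (L * k)) :
    HasThreeHalvesPower W k := by
  obtain ⟨i, hper⟩ := h
  obtain ⟨m, him, hmi⟩ := Nat.exists_le_mul_lt_add hL i
  refine ⟨m, fun j hj => ?_⟩
  have hjk : L * (j + 1) ≤ L * k := Nat.mul_le_mul_left L hj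
  have := hper (L * m + L * j - i) (by rw [Nat.mul_succ] at hjk; omega)
  rw [← hW, ← hW (m + 2 * k + j), Nat.mul_add, Nat.mul_add, Nat.mul_add, Nat.mul_left_comm]
  convert this using 2 <;> omega

section UniformMorphism

variable {α : Type*} {σ : α → List α} {L : ℕ}

theorem getElem?_flatMap_of_length_eq (hσ : ∀ a, (σ a).length = L) (l : List α) {m s : ℕ}
    (hs : s < L) : (l.flatMap σ)[L * m + s]? = l[m]?.bind fun a => (σ a)[s]? := by
  induction l generalizing m with
  | nil => simp
  | cons a l ih =>
    cases m with
    | zero => simp [List.getElem?_append_left, hσ, hs]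
    | succ m =>
      rw [List.flatMap_cons, List.getElem?_append_right (by rw [hσ, Nat.mul_succ]; omega), hσ,
        show L * (m + 1) + s - L = L * m + s by rw [Nat.mul_succ]; omega, ih]
      rfl

theorem apply_eq_window_of_iterate (hσ : ∀ a, (σ a).length = L) (hL : 1 < L) {W : ℕ → α}
    {a : α} (hW : ∀ n, (List.range (L ^ n)).map W = (List.flatMap σ)^[n] [a]) (m : ℕ) :
    σ (W m) = window W (L * m) L := by
  have hm : m < L ^ m := Nat.lt_pow_self hL
  have hstep : (List.range (L ^ (m + 1))).map W = ((List.range (L ^ m)).map W).flatMap σ := by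
    rw [hW, hW, Function.iterate_succ_apply']
  refine List.ext_getElem? fun s => ?_
  by_cases hs : s < L
  · have hlt : L * m + s < L ^ (m + 1) :=
      calc L * m + s < L * (m + 1) := by rw [Nat.mul_succ]; omega
        _ ≤ L * L ^ m := Nat.mul_le_mul_left L hm
        _ = L ^ (m + 1) := (pow_succ' L m).symm
    have := congrArg (·[L * m + s]?) hstep
    simp only [getElem?_flatMap_of_length_eq hσ _ hs, List.getElem?_map,
      List.getElem?_range hlt, List.getElem?_range hm, Option.map_some, Option.bind_some] at this
    rw [getElem?_window_of_lt _ hs, ← this]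
  · rw [List.getElem?_eq_none (by rw [hσ]; omega), List.getElem?_eq_none (by simp; omega)]

variable {W : ℕ → α} (hW : ∀ m, σ (W m) = window W (L * m) L)
include hW

theorem flatMap_window (i n : ℕ) : (window W i n).flatMap σ = window W (L * i) (L * n) := by
  induction n with
  | zero => simp [window]
  | succ n ih =>
    rw [window_add, List.flatMap_append, ih, window_one, List.flatMap_singleton, hW, Nat.mul_succ,
      window_add, Nat.mul_add]

-- The block `σ (W m)` lying in the first third of the power reappears `2 * k` letters later,
-- at offset `2 * k % L` inside two consecutive blocks with distinct letters.
theorem dvd_two_mul_of_hasThreeHalvesPower (hL : 0 < L)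
    (hsync : ∀ a b c, b ≠ c → ∀ t < L, 0 < t →
      ∃ s < L, (σ a)[s]? ≠ (σ b ++ σ c)[t + s]?)
    (hadj : ∀ n, W n ≠ W (n + 1)) {k : ℕ} (hk : 2 * L ≤ k + 1)
    (h : HasThreeHalvesPower W k) : L ∣ 2 * k := by
  obtain ⟨i, hper⟩ := h
  obtain ⟨m, him, hmi⟩ := Nat.exists_le_mul_lt_add hL i
  obtain ⟨q, t, hqt, htL⟩ : ∃ q t, 2 * k = L * q + t ∧ t < L :=
    ⟨_, _, (Nat.div_add_mod _ _).symm, Nat.mod_lt _ hL⟩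
  rcases Nat.eq_zero_or_pos t with rfl | ht
  · exact ⟨q, hqt⟩
  obtain ⟨s, hs, hne⟩ := hsync (W m) (W (m + q)) (W (m + q + 1)) (hadj _) t htL ht
  refine absurd ?_ hne
  rw [hW, hW, hW, Nat.mul_succ, ← window_add, getElem?_window_of_lt _ hs,
    getElem?_window_of_lt _ (by omega), Nat.mul_add]
  convert congrArg some (hper (L * m + s - i) (by omega)) using 3 <;> omega

end UniformMorphism

theorem Nat.ofDigits_div_pow_mod_pow {p : ℕ} (hp : 0 < p) {l : List ℕ} (hl : ∀ d ∈ l, d < p)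
    (i k : ℕ) : Nat.ofDigits p l / p ^ i % p ^ k = Nat.ofDigits p ((l.drop i).take k) := by
  rw [Nat.ofDigits_div_pow_eq_ofDigits_drop i hp l hl,
    Nat.ofDigits_mod_pow_eq_ofDigits_take k hp _ fun d hd => hl d (List.mem_of_mem_drop hd)]

theorem exists_eq_three_mul_two_mul_of_div_eq {p q : ℕ} (hq : 0 < q)
    (h : (p : ℚ) / q = 3 / 2) : ∃ k, 0 < k ∧ p = 3 * k ∧ q = 2 * k := by
  rw [div_eq_div_iff (by positivity) (by norm_num)] at h
  have h' : p * 2 = 3 * q := by exact_mod_cast h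
  exact ⟨p - q, by omega, by omega, by omega⟩

namespace Hmor

theorem hmor_eq_flatMap : hmor = List.flatMap fun a => hmor [a] := by
  funext w
  simp [hmor]

theorem length_hmor_singleton : ∀ a, (hmor [a]).length = 11 := by decide

theorem getElem?_zero_hmor_singleton : ∀ a, (hmor [a])[0]? = some a := by decide

theorem getElem?_ten_hmor_singleton : ∀ a, (hmor [a])[10]? = some a := by decide

theorem getElem?_hmor_singleton_ne_succ :
    ∀ a, ∀ s < 10, (hmor [a])[s]? ≠ (hmor [a])[s + 1]? := by
  decide

theorem hmor_singleton_synchronizing : ∀ a b c : Fin 4, b ≠ c → ∀ t < 11, 0 < t →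
    ∃ s < 11, (hmor [a])[s]? ≠ (hmor [b] ++ hmor [c])[t + s]? := by
  decide

-- Factors are compared through their base-4 encodings, because the kernel evaluates `Nat`
-- arithmetic natively but unfolds list comparisons step by step.
theorem ofDigits_hmor_hmor_div_pow_mod_ne :
    ∀ b c : Fin 4, b ≠ c → ∀ k < 21, 5 ≤ k → k ≠ 11 → ∀ r < 121,
      Nat.ofDigits 4 ((hmor (hmor [b, c])).map Fin.val) / 4 ^ r % 4 ^ k ≠
        Nat.ofDigits 4 ((hmor (hmor [b, c])).map Fin.val) / 4 ^ (r + 2 * k) % 4 ^ k := by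
  decide +kernel

theorem take_drop_hmor_hmor_ne {b c : Fin 4} (hbc : b ≠ c) {k r : ℕ} (h5 : 5 ≤ k)
    (h20 : k ≤ 20) (h11 : k ≠ 11) (hr : r < 121) :
    ((hmor (hmor [b, c])).drop r).take k ≠ ((hmor (hmor [b, c])).drop (r + 2 * k)).take k := by
  intro h
  apply ofDigits_hmor_hmor_div_pow_mod_ne b c hbc k (by omega) h5 h11 r hr
  have hdigits : ∀ d ∈ (hmor (hmor [b, c])).map Fin.val, d < 4 := by simp
  rw [Nat.ofDigits_div_pow_mod_pow (by norm_num) hdigits,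
    Nat.ofDigits_div_pow_mod_pow (by norm_num) hdigits, ← List.map_drop, ← List.map_take,
    ← List.map_drop, ← List.map_take, h]

variable {W : ℕ → Fin 4} (hW : ∀ n, (List.range (11 ^ n)).map W = hmor^[n] [0])
include hW

theorem hmor_singleton_eq_window (m : ℕ) : hmor [W m] = window W (11 * m) 11 := by
  rw [hmor_eq_flatMap] at hW
  exact apply_eq_window_of_iterate length_hmor_singleton (by norm_num) hW m

theorem hmor_window (i n : ℕ) : hmor (window W i n) = window W (11 * i) (11 * n) := by
  rw [hmor_eq_flatMap]
  exact flatMap_window (hmor_singleton_eq_window hW) i n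

theorem getElem?_hmor_singleton_apply (m : ℕ) {s : ℕ} (hs : s < 11) :
    (hmor [W m])[s]? = some (W (11 * m + s)) := by
  rw [hmor_singleton_eq_window hW, getElem?_window_of_lt _ hs]

theorem apply_eleven_mul (m : ℕ) : W (11 * m) = W m := by
  simpa [getElem?_hmor_singleton_apply hW] using getElem?_zero_hmor_singleton (W m)

theorem apply_ne_apply_succ (n : ℕ) : W n ≠ W (n + 1) := by
  induction n using Nat.strong_induction_on with
  | _ n ih =>
    obtain ⟨m, s, rfl, hs⟩ : ∃ m s, n = 11 * m + s ∧ s < 11 :=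
      ⟨n / 11, n % 11, by omega, by omega⟩
    rcases Nat.lt_or_ge s 10 with hs10 | hs10
    · have := getElem?_hmor_singleton_ne_succ (W m) s hs10
      rwa [getElem?_hmor_singleton_apply hW m hs, getElem?_hmor_singleton_apply hW m (by omega),
        Ne, Option.some_inj] at this
    · have hlast : W (11 * m + 10) = W m := by
        simpa [getElem?_hmor_singleton_apply hW] using getElem?_ten_hmor_singleton (W m)
      rw [show s = 10 by omega, hlast, show 11 * m + 10 + 1 = 11 * (m + 1) by ring,
        apply_eleven_mul hW]
      exact ih m (by omega)

theorem eleven_dvd_of_hasThreeHalvesPower {k : ℕ} (hk : 21 ≤ k)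
    (h : HasThreeHalvesPower W k) : 11 ∣ k := by
  have := dvd_two_mul_of_hasThreeHalvesPower (hmor_singleton_eq_window hW) (by norm_num)
    hmor_singleton_synchronizing (apply_ne_apply_succ hW) (by omega) h
  omega

theorem not_hasThreeHalvesPower_of_le_twenty {k : ℕ} (h5 : 5 ≤ k) (h20 : k ≤ 20)
    (h11 : k ≠ 11) : ¬ HasThreeHalvesPower W k := by
  rintro ⟨i, hper⟩
  obtain ⟨m, r, rfl, hr⟩ : ∃ m r, i = 121 * m + r ∧ r < 121 :=
    ⟨i / 121, i % 121, by omega, by omega⟩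
  have hw : hmor (hmor [W m, W (m + 1)]) = window W (121 * m) 242 := by
    rw [← window_two, hmor_window hW, hmor_window hW, ← Nat.mul_assoc]
  apply take_drop_hmor_hmor_ne (apply_ne_apply_succ hW m) h5 h20 h11 hr
  rw [hw, take_drop_window _ (by omega), take_drop_window _ (by omega), ← Nat.add_assoc]
  exact (window_eq_window_iff W).mpr hper

theorem exists_eq_mul_pow_of_hasThreeHalvesPower {k : ℕ} (hk : 0 < k)
    (h : HasThreeHalvesPower W k) : ∃ i a, 1 ≤ a ∧ a ≤ 4 ∧ k = a * 11 ^ i := by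
  induction k using Nat.strong_induction_on with
  | _ k ih =>
    by_cases h4 : k ≤ 4
    · exact ⟨0, k, hk, h4, by simp⟩
    by_cases h11 : k = 11
    · exact ⟨1, 1, le_rfl, by norm_num, by simp [h11]⟩
    by_cases h20 : k ≤ 20
    · exact absurd h (not_hasThreeHalvesPower_of_le_twenty hW (by omega) h20 h11)
    obtain ⟨k', rfl⟩ := eleven_dvd_of_hasThreeHalvesPower hW (by omega) h
    obtain ⟨i, a, ha1, ha4, rfl⟩ :=
      ih k' (by omega) (by omega) (h.of_mul_left (by norm_num) (apply_eleven_mul hW))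
    exact ⟨i + 1, a, ha1, ha4, by ring⟩

end Hmor

/-- In the fixed point `h^ω(0)`, every factor of length `p` with period `q`
and `p/q = 3/2` has length `a · 11^i` with `a ∈ {3, 6, 9, 12}`. -/
theorem hmor_fixed_point_32_powers_lengths (W : ℕ → Fin 4)
    (hW : ∀ n : ℕ, (List.range (11 ^ n)).map W = (hmor^[n]) [0]) :
    ∀ x : List (Fin 4),
      (∃ i : ℕ, x = (List.range x.length).map (fun j => W (i + j))) →
      ∀ q : ℕ, HasPeriod x q → (x.length : ℚ) / (q : ℚ) = 3 / 2 →
      ∃ i a : ℕ, (a = 3 ∨ a = 6 ∨ a = 9 ∨ a = 12) ∧ x.length = a * 11 ^ i := by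
  rintro x ⟨i, hx⟩ q hper hexp
  obtain ⟨k, hk, hxk, rfl⟩ := exists_eq_three_mul_two_mul_of_div_eq hper.1 hexp
  rw [show x = window W i x.length from hx] at hper
  have hpow : HasThreeHalvesPower W k := ⟨i, fun j hj => hper.apply_eq_of_window (by omega)⟩
  obtain ⟨n, a, ha1, ha4, rfl⟩ := Hmor.exists_eq_mul_pow_of_hasThreeHalvesPower hW hk hpow
  exact ⟨n, 3 * a, by omega, by rw [hxk, Nat.mul_assoc]⟩
end
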